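/- arXiv:1101.3839 — 6 statements merged into one kernel-verified Lean document; each statement's English description precedes it below -/
import Mathlib

section
/- If n divides m (for positive integers n, m), and (h_k) is a sequence of integers satisfying h_{m+n}h_{m-n} = h_{m+1}h_{m-1}h_n^2 - h_{n+1}h_{n-1}h_m^2 for all m ≥ n ≥ 1, with h_0 = 0, h_1 = 1, h_2 = -α, h_3 = -α^3, h_4 = 0 for a nonzero integer α, then h_n divides h_m. -/
def edsG (α : ℤ) (n : ℕ) : ℤ :=
  if n % 4 = 0 then 0
  else (if n % 8 = 2 ∨ n % 8 = 3 ∨ n % 8 = 7 then -1 else 1) * α ^ (3 * n ^ 2 / 8)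
lemma edsG_zero (α : ℤ) (n : ℕ) (hn : n % 4 = 0) : edsG α n = 0 := by simp [edsG, hn]
lemma edsG_eval (α : ℤ) (q c : ℕ) (hc : c % 4 ≠ 0) :
    edsG α (8 * q + c) =
      (if c % 8 = 2 ∨ c % 8 = 3 ∨ c % 8 = 7 then -1 else 1) *
        α ^ (24 * q ^ 2 + 6 * q * c + 3 * c ^ 2 / 8) := by
  have h1 : (8 * q + c) % 4 = c % 4 := by omega
  have h2 : (8 * q + c) % 8 = c % 8 := by omega
  have h3 : 3 * (8 * q + c) ^ 2 / 8 = 24 * q ^ 2 + 6 * q * c + 3 * c ^ 2 / 8 := by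
    have : 3 * (8 * q + c) ^ 2 = 8 * (24 * q ^ 2 + 6 * q * c) + 3 * c ^ 2 := by ring
    rw [this, Nat.mul_add_div (by norm_num)]
  simp only [edsG, h1, h2, h3, if_neg hc]

lemma edsKey (α : ℤ) (j : ℕ) (hj : (j + 9) % 4 ≠ 0) :
    edsG α (j + 9) * edsG α (j + 5) =
      edsG α (j + 8) * edsG α (j + 6) * (-α) ^ 2 - -α ^ 3 * 1 * edsG α (j + 7) ^ 2 := by
  obtain ⟨q, t, ht, rfl⟩ : ∃ q t, t < 8 ∧ j = 8 * q + t :=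
    ⟨j / 8, j % 8, Nat.mod_lt _ (by norm_num), (Nat.div_add_mod j 8).symm⟩
  have ht' : t ≠ 3 ∧ t ≠ 7 := by omega
  interval_cases t
  · rw [show 8*q+0+5 = 8*q+5 by ring, show 8*q+0+6 = 8*q+6 by ring, show 8*q+0+7 = 8*q+7 by ring, show 8*q+0+8 = 8*q+8 by ring, show 8*q+0+9 = 8*q+9 by ring,
      edsG_eval α q 9 (by norm_num), edsG_eval α q 5 (by norm_num), edsG_eval α q 6 (by norm_num), edsG_eval α q 7 (by norm_num),
      edsG_zero α (8*q+8) (by omega)]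
    norm_num
    ring
  · rw [show 8*q+1+5 = 8*q+6 by ring, show 8*q+1+6 = 8*q+7 by ring, show 8*q+1+7 = 8*q+8 by ring, show 8*q+1+8 = 8*q+9 by ring, show 8*q+1+9 = 8*q+10 by ring,
      edsG_eval α q 10 (by norm_num), edsG_eval α q 6 (by norm_num), edsG_eval α q 9 (by norm_num), edsG_eval α q 7 (by norm_num),
      edsG_zero α (8*q+8) (by omega)]
    norm_num
    ring
  · rw [show 8*q+2+5 = 8*q+7 by ring, show 8*q+2+6 = 8*q+8 by ring, show 8*q+2+7 = 8*q+9 by ring, show 8*q+2+8 = 8*q+10 by ring, show 8*q+2+9 = 8*q+11 by ring,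
      edsG_eval α q 11 (by norm_num), edsG_eval α q 7 (by norm_num), edsG_eval α q 10 (by norm_num), edsG_eval α q 9 (by norm_num),
      edsG_zero α (8*q+8) (by omega)]
    norm_num
    ring
  · omega
  · rw [show 8*q+4+5 = 8*q+9 by ring, show 8*q+4+6 = 8*q+10 by ring, show 8*q+4+7 = 8*q+11 by ring, show 8*q+4+8 = 8*q+12 by ring, show 8*q+4+9 = 8*q+13 by ring,
      edsG_eval α q 13 (by norm_num), edsG_eval α q 9 (by norm_num), edsG_eval α q 10 (by norm_num), edsG_eval α q 11 (by norm_num),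
      edsG_zero α (8*q+12) (by omega)]
    norm_num
    ring
  · rw [show 8*q+5+5 = 8*q+10 by ring, show 8*q+5+6 = 8*q+11 by ring, show 8*q+5+7 = 8*q+12 by ring, show 8*q+5+8 = 8*q+13 by ring, show 8*q+5+9 = 8*q+14 by ring,
      edsG_eval α q 14 (by norm_num), edsG_eval α q 10 (by norm_num), edsG_eval α q 13 (by norm_num), edsG_eval α q 11 (by norm_num),
      edsG_zero α (8*q+12) (by omega)]
    norm_num
    ring
  · rw [show 8*q+6+5 = 8*q+11 by ring, show 8*q+6+6 = 8*q+12 by ring, show 8*q+6+7 = 8*q+13 by ring, show 8*q+6+8 = 8*q+14 by ring, show 8*q+6+9 = 8*q+15 by ring,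
      edsG_eval α q 15 (by norm_num), edsG_eval α q 11 (by norm_num), edsG_eval α q 14 (by norm_num), edsG_eval α q 13 (by norm_num),
      edsG_zero α (8*q+12) (by omega)]
    norm_num
    ring
  · omega

lemma edsG_ne_zero (α : ℤ) (hα : α ≠ 0) (n : ℕ) (hn : n % 4 ≠ 0) : edsG α n ≠ 0 := by
  simp only [edsG, if_neg hn]
  split_ifs <;> simp [pow_ne_zero, hα]

lemma eds_formula (α : ℤ) (hα : α ≠ 0) (h : ℕ → ℤ)
    (hrec : ∀ m n : ℕ, 1 ≤ n → n ≤ m →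
      h (m + n) * h (m - n) = h (m + 1) * h (m - 1) * h n ^ 2 - h (n + 1) * h (n - 1) * h m ^ 2)
    (h0 : h 0 = 0) (h1 : h 1 = 1) (h2 : h 2 = -α) (h3 : h 3 = -α ^ 3) (h4 : h 4 = 0) :
    ∀ k, h k = edsG α k := by
  have h5 : h 5 = α ^ 9 := by
    have e := hrec 3 2 (by norm_num) (by norm_num)
    norm_num [h1, h2, h3, h4] at e
    linear_combination e
  have h6 : h 6 = α ^ 13 := by
    have e := hrec 4 2 (by norm_num) (by norm_num)
    norm_num [h1, h2, h3, h4, h5] at e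
    have : h 6 * α = α ^ 13 * α := by linear_combination e
    exact mul_right_cancel₀ hα this
  have h7 : h 7 = -α ^ 18 := by
    have e := hrec 4 3 (by norm_num) (by norm_num)
    norm_num [h1, h2, h3, h4, h5] at e
    linear_combination e
  have h8 : h 8 = 0 := by
    have e := hrec 5 3 (by norm_num) (by norm_num)
    norm_num [h1, h2, h3, h4, h5, h6] at e
    rcases e with e | e
    · exact e
    · exact absurd e hα
  intro k
  induction k using Nat.strong_induction_on with
  | _ k ih =>
    rcases le_or_gt k 8 with hk | hk
    · interval_cases k <;>
        simp_all [edsG] <;> norm_num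
    · obtain ⟨j, rfl⟩ : ∃ j, k = j + 9 := ⟨k - 9, by omega⟩
      by_cases hm4 : (j + 9) % 4 = 0
      · have e := hrec (j + 6) 3 (by omega) (by omega)
        rw [show j + 6 + 3 = j + 9 by ring, show j + 6 - 3 = j + 3 by omega,
          show j + 6 + 1 = j + 7 by ring, show j + 6 - 1 = j + 5 by omega,
          h4, h2, ih (j + 5) (by omega), edsG_zero α (j + 5) (by omega)] at e
        have hz : h (j + 9) * h (j + 3) = 0 := by linear_combination e
        rw [ih (j + 3) (by omega)] at hz
        have := edsG_ne_zero α hα (j + 3) (by omega)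
        rw [edsG_zero α (j + 9) hm4]
        rcases mul_eq_zero.mp hz with h' | h'
        · exact h'
        · exact absurd h' this
      · have e := hrec (j + 7) 2 (by omega) (by omega)
        rw [show j + 7 + 2 = j + 9 by ring, show j + 7 - 2 = j + 5 by omega,
          show j + 7 + 1 = j + 8 by ring, show j + 7 - 1 = j + 6 by omega,
          h1, h2, h3, ih (j + 5) (by omega), ih (j + 6) (by omega),
          ih (j + 7) (by omega), ih (j + 8) (by omega)] at e
        have key := edsKey α j hm4
        have hz := edsG_ne_zero α hα (j + 5) (by omega)
        apply mul_right_cancel₀ hz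
        rw [e, key]

theorem eds_rank4_divisibility (α : ℤ) (hα : α ≠ 0) (h : ℕ → ℤ)
    (hrec : ∀ m n : ℕ, 1 ≤ n → n ≤ m →
      h (m + n) * h (m - n) = h (m + 1) * h (m - 1) * h n ^ 2 - h (n + 1) * h (n - 1) * h m ^ 2)
    (h0 : h 0 = 0) (h1 : h 1 = 1) (h2 : h 2 = -α) (h3 : h 3 = -α ^ 3) (h4 : h 4 = 0)
    (n m : ℕ) (hn : 0 < n) (hm : 0 < m) (hdvd : n ∣ m) :
    h n ∣ h m := by
  have hf := eds_formula α hα h hrec h0 h1 h2 h3 h4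
  rw [hf n, hf m]
  have hnm : n ≤ m := Nat.le_of_dvd hm hdvd
  by_cases hm4 : m % 4 = 0
  · rw [edsG_zero α m hm4]; exact dvd_zero _
  · have hn4 : n % 4 ≠ 0 := by
      intro hn4
      have : (4 : ℕ) ∣ m := dvd_trans ⟨n / 4, by omega⟩ hdvd
      omega
    have hle : 3 * n ^ 2 / 8 ≤ 3 * m ^ 2 / 8 :=
      Nat.div_le_div_right (Nat.mul_le_mul_left 3 (Nat.pow_le_pow_left hnm 2))
    have hd : α ^ (3 * n ^ 2 / 8) ∣ α ^ (3 * m ^ 2 / 8) := pow_dvd_pow α hle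
    simp only [edsG, if_neg hn4, if_neg hm4]
    split_ifs <;> simpa [neg_dvd, dvd_neg] using hd
end

section
/- Let α be a nonzero integer and let (h_n) be the sequence determined by h_0 = 0, h_1 = 1, h_2 = -α, h_3 = -α^3, h_4 = 0 and the EDS recurrence h_{m+n}h_{m-n} = h_{m+1}h_{m-1}h_n^2 - h_{n+1}h_{n-1}h_m^2. Then for all n, h_n = ε·α^{(3n^2-p)/8}, where ε = +1 if n ≡ 1,5,6 (mod 8), ε = -1 if n ≡ 2,3,7 (mod 8), ε = 0 if n ≡ 0,4 (mod 8), and p = 3 if n ≡ 1,3 (mod 4), p = 4 if n ≡ 2 (mod 4). -/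
private def G (α : ℤ) (n : ℕ) : ℤ :=
  (if n % 8 = 1 ∨ n % 8 = 5 ∨ n % 8 = 6 then (1 : ℤ)
   else if n % 8 = 2 ∨ n % 8 = 3 ∨ n % 8 = 7 then -1 else 0) *
  α ^ ((3 * n ^ 2 - (if n % 4 = 2 then 4 else 3)) / 8)

private lemma Gexp (q A B : ℕ) (c r : ℕ) (hE : 3 * (8 * q + r) ^ 2 = 8 * A + c) (hB : A = B) :
    (3 * (8 * q + r) ^ 2 - c) / 8 = B := by
  subst hB; rw [hE]; generalize A = E; omega

private lemma G0 (α : ℤ) (q : ℕ) : G α (8 * q) = 0 := by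
  have m8 : (8 * q) % 8 = 0 := by omega
  simp [G, m8]

private lemma G4 (α : ℤ) (q : ℕ) : G α (8 * q + 4) = 0 := by
  have m8 : (8 * q + 4) % 8 = 4 := by omega
  simp [G, m8]

private lemma G1 (α : ℤ) (q : ℕ) : G α (8 * q + 1) = α ^ (24 * q ^ 2 + 6 * q) := by
  have m8 : (8 * q + 1) % 8 = 1 := by omega
  have m4 : (8 * q + 1) % 4 = 1 := by omega
  simp only [G, m8, m4]
  norm_num
  congr 1
  exact Gexp q _ _ 3 1 (by ring) rfl

private lemma G2 (α : ℤ) (q : ℕ) : G α (8 * q + 2) = -α ^ (24 * q ^ 2 + 12 * q + 1) := by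
  have m8 : (8 * q + 2) % 8 = 2 := by omega
  have m4 : (8 * q + 2) % 4 = 2 := by omega
  simp only [G, m8, m4]
  norm_num
  congr 1
  exact Gexp q _ _ 4 2 (by ring) rfl

private lemma G3 (α : ℤ) (q : ℕ) : G α (8 * q + 3) = -α ^ (24 * q ^ 2 + 18 * q + 3) := by
  have m8 : (8 * q + 3) % 8 = 3 := by omega
  have m4 : (8 * q + 3) % 4 = 3 := by omega
  simp only [G, m8, m4]
  norm_num
  congr 1
  exact Gexp q _ _ 3 3 (by ring) rfl

private lemma G5 (α : ℤ) (q : ℕ) : G α (8 * q + 5) = α ^ (24 * q ^ 2 + 30 * q + 9) := by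
  have m8 : (8 * q + 5) % 8 = 5 := by omega
  have m4 : (8 * q + 5) % 4 = 1 := by omega
  simp only [G, m8, m4]
  norm_num
  congr 1
  exact Gexp q _ _ 3 5 (by ring) rfl

private lemma G6 (α : ℤ) (q : ℕ) : G α (8 * q + 6) = α ^ (24 * q ^ 2 + 36 * q + 13) := by
  have m8 : (8 * q + 6) % 8 = 6 := by omega
  have m4 : (8 * q + 6) % 4 = 2 := by omega
  simp only [G, m8, m4]
  norm_num
  congr 1
  exact Gexp q _ _ 4 6 (by ring) rfl

private lemma G7 (α : ℤ) (q : ℕ) : G α (8 * q + 7) = -α ^ (24 * q ^ 2 + 42 * q + 18) := by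
  have m8 : (8 * q + 7) % 8 = 7 := by omega
  have m4 : (8 * q + 7) % 4 = 3 := by omega
  simp only [G, m8, m4]
  norm_num
  congr 1
  exact Gexp q _ _ 3 7 (by ring) rfl

private lemma Gzero (α : ℤ) (n : ℕ) (hn : n % 4 = 0) : G α n = 0 := by
  rcases (by omega : n % 8 = 0 ∨ n % 8 = 4) with hr | hr
  · obtain ⟨q, rfl⟩ : ∃ q, n = 8 * q := ⟨n / 8, by omega⟩
    exact G0 α q
  · obtain ⟨q, rfl⟩ : ∃ q, n = 8 * q + 4 := ⟨n / 8, by omega⟩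
    exact G4 α q

private lemma Gne (α : ℤ) (hα : α ≠ 0) (n : ℕ) (hn : n % 4 ≠ 0) : G α n ≠ 0 := by
  have h8 : n % 8 = 1 ∨ n % 8 = 2 ∨ n % 8 = 3 ∨ n % 8 = 5 ∨ n % 8 = 6 ∨ n % 8 = 7 := by omega
  have hq : n = 8 * (n / 8) + n % 8 := by omega
  rcases h8 with hr | hr | hr | hr | hr | hr <;> rw [hr] at hq <;>
    rw [show n = 8 * (n / 8) + _ from hq] <;>
    simp only [G0, G1, G2, G3, G4, G5, G6, G7] <;>
    simp [pow_ne_zero, hα]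

private lemma Gid (α : ℤ) (n : ℕ) (h5 : 5 ≤ n) (hn : n % 4 ≠ 0) :
    G α n * G α (n - 4) = G α (n - 1) * G α (n - 3) * α ^ 2 + α ^ 3 * G α (n - 2) ^ 2 := by
  have h8 : n % 8 = 1 ∨ n % 8 = 2 ∨ n % 8 = 3 ∨ n % 8 = 5 ∨ n % 8 = 6 ∨ n % 8 = 7 := by omega
  rcases h8 with hr | hr | hr | hr | hr | hr
  · obtain ⟨q, rfl⟩ : ∃ q, n = 8 * q + 9 := ⟨(n - 9) / 8, by omega⟩
    rw [show 8 * q + 9 = 8 * (q + 1) + 1 by omega, show 8 * (q + 1) + 1 - 1 = 8 * (q + 1) by omega,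
      show 8 * (q + 1) + 1 - 3 = 8 * q + 6 by omega, show 8 * (q + 1) + 1 - 2 = 8 * q + 7 by omega,
      show 8 * (q + 1) + 1 - 4 = 8 * q + 5 by omega, G1, G0, G6, G7, G5]
    ring
  · obtain ⟨q, rfl⟩ : ∃ q, n = 8 * q + 10 := ⟨(n - 10) / 8, by omega⟩
    rw [show 8 * q + 10 = 8 * (q + 1) + 2 by omega,
      show 8 * (q + 1) + 2 - 1 = 8 * (q + 1) + 1 by omega,
      show 8 * (q + 1) + 2 - 3 = 8 * q + 7 by omega,
      show 8 * (q + 1) + 2 - 2 = 8 * (q + 1) by omega,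
      show 8 * (q + 1) + 2 - 4 = 8 * q + 6 by omega, G2, G1, G7, G0, G6]
    ring
  · obtain ⟨q, rfl⟩ : ∃ q, n = 8 * q + 11 := ⟨(n - 11) / 8, by omega⟩
    rw [show 8 * q + 11 = 8 * (q + 1) + 3 by omega,
      show 8 * (q + 1) + 3 - 1 = 8 * (q + 1) + 2 by omega,
      show 8 * (q + 1) + 3 - 3 = 8 * (q + 1) by omega,
      show 8 * (q + 1) + 3 - 2 = 8 * (q + 1) + 1 by omega,
      show 8 * (q + 1) + 3 - 4 = 8 * q + 7 by omega, G3, G2, G0, G1, G7]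
    ring
  · obtain ⟨q, rfl⟩ : ∃ q, n = 8 * q + 5 := ⟨(n - 5) / 8, by omega⟩
    rw [show 8 * q + 5 - 1 = 8 * q + 4 by omega, show 8 * q + 5 - 3 = 8 * q + 2 by omega,
      show 8 * q + 5 - 2 = 8 * q + 3 by omega, show 8 * q + 5 - 4 = 8 * q + 1 by omega,
      G5, G4, G2, G3, G1]
    ring
  · obtain ⟨q, rfl⟩ : ∃ q, n = 8 * q + 6 := ⟨(n - 6) / 8, by omega⟩
    rw [show 8 * q + 6 - 1 = 8 * q + 5 by omega, show 8 * q + 6 - 3 = 8 * q + 3 by omega,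
      show 8 * q + 6 - 2 = 8 * q + 4 by omega, show 8 * q + 6 - 4 = 8 * q + 2 by omega,
      G6, G5, G3, G4, G2]
    ring
  · obtain ⟨q, rfl⟩ : ∃ q, n = 8 * q + 7 := ⟨(n - 7) / 8, by omega⟩
    rw [show 8 * q + 7 - 1 = 8 * q + 6 by omega, show 8 * q + 7 - 3 = 8 * q + 4 by omega,
      show 8 * q + 7 - 2 = 8 * q + 5 by omega, show 8 * q + 7 - 4 = 8 * q + 3 by omega,
      G7, G6, G4, G5, G3]
    ring

theorem eds_rank4_general_term (α : ℤ) (hα : α ≠ 0) (h : ℕ → ℤ)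
    (hrec : ∀ m n : ℕ, 1 ≤ n → n ≤ m →
      h (m + n) * h (m - n) = h (m + 1) * h (m - 1) * h n ^ 2 - h (n + 1) * h (n - 1) * h m ^ 2)
    (h0 : h 0 = 0) (h1 : h 1 = 1) (h2 : h 2 = -α) (h3 : h 3 = -α ^ 3) (h4 : h 4 = 0) :
    ∀ n : ℕ, h n =
      (if n % 8 = 1 ∨ n % 8 = 5 ∨ n % 8 = 6 then (1 : ℤ)
       else if n % 8 = 2 ∨ n % 8 = 3 ∨ n % 8 = 7 then -1 else 0) *
      α ^ ((3 * n ^ 2 - (if n % 4 = 2 then 4 else 3)) / 8) := by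
  suffices H : ∀ n, h n = G α n by
    intro n; rw [H n]; rfl
  intro n
  induction n using Nat.strong_induction_on with
  | _ n ih =>
    by_cases hn5 : n ≤ 4
    · interval_cases n <;> simp [G, h0, h1, h2, h3, h4]
    · push_neg at hn5
      by_cases hm : n % 4 = 0
      · -- n ≥ 8, use m = n-3, k = 3
        have hn8 : 8 ≤ n := by omega
        have key := hrec (n - 3) 3 (by omega) (by omega)
        rw [show n - 3 + 3 = n by omega, show n - 3 - 3 = n - 6 by omega,
          show n - 3 + 1 = n - 2 by omega, show n - 3 - 1 = n - 4 by omega, h4, h2] at key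
        have e6 : h (n - 6) = G α (n - 6) := ih _ (by omega)
        have e4 : h (n - 4) = G α (n - 4) := ih _ (by omega)
        rw [e6, e4, Gzero α (n - 4) (by omega)] at key
        have hne : G α (n - 6) ≠ 0 := Gne α hα _ (by omega)
        have : h n = 0 := by
          rcases mul_eq_zero.mp (by linarith [key] : h n * G α (n - 6) = 0) with h' | h'
          · exact h'
          · exact absurd h' hne
        rw [this, Gzero α n hm]
      · -- use m = n-2, k = 2
        have key := hrec (n - 2) 2 (by omega) (by omega)
        rw [show n - 2 + 2 = n by omega, show n - 2 - 2 = n - 4 by omega,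
          show n - 2 + 1 = n - 1 by omega, show n - 2 - 1 = n - 3 by omega, h1, h2, h3] at key
        have e1 : h (n - 1) = G α (n - 1) := ih _ (by omega)
        have e2 : h (n - 2) = G α (n - 2) := ih _ (by omega)
        have e3 : h (n - 3) = G α (n - 3) := ih _ (by omega)
        have e4 : h (n - 4) = G α (n - 4) := ih _ (by omega)
        rw [e1, e2, e3, e4] at key
        have hne : G α (n - 4) ≠ 0 := Gne α hα _ (by omega)
        have hid := Gid α n hn5 hm
        have : h n * G α (n - 4) = G α n * G α (n - 4) := by
          rw [key, hid]; ring
        exact mul_right_cancel₀ hne this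
end

section
/- Let α be a nonzero integer and let (h_n) be the sequence determined by h_0 = 0, h_1 = 1, h_2 = -α, h_3 = -α^3, h_4 = α^6, h_5 = 0 and the EDS recurrence. Then for all n, h_n = ε·α^{(2n^2-p)/5}, where ε = +1 if n ≡ 1,4,7,8 (mod 10), ε = -1 if n ≡ 2,3,6,9 (mod 10), ε = 0 if n ≡ 0 (mod 5), and p = 2 if n ≡ 1,4 (mod 5), p = 3 if n ≡ 2,3 (mod 5). -/
/-!
The relations at `(j + 2, j + 1)` and `(j + 3, j + 1)` express `h (2j+3) * h 1` and
`h (2j+4) * h 2` through earlier terms, so once `h 1` and `h 2 = -α` are nonzero the sequence is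
determined by `h 0, …, h 4`. It therefore suffices that the closed form satisfies these two
families of relations. The closed form is quasi-periodic,
`F (n + 5) = -α ^ 10 * (α ^ 4) ^ n * F n`, and since `(α ^ 4) ^ 5 = (-α ^ 10) ^ 2` each relation
for `j + 5` is a multiple of the one for `j`; this leaves the five cases `j < 5`, which are
identities between monomials in `α`.
-/

def EDSRel {R : Type*} [CommRing R] (f : ℕ → R) (m n : ℕ) : Prop :=
  f (m + n) * f (m - n) = f (m + 1) * f (m - 1) * f n ^ 2 - f (n + 1) * f (n - 1) * f m ^ 2

namespace EDSRel

variable {R : Type*} [CommRing R] {f : ℕ → R}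

theorem shift {A B : R} {r m n : ℕ} (hper : ∀ k, f (k + r) = A * B ^ k * f k)
    (hBA : B ^ r = A ^ 2) (hm : 1 ≤ m) (hn : 1 ≤ n) (h : EDSRel f m n) :
    EDSRel f (m + r) (n + r) := by
  obtain ⟨m, rfl⟩ := Nat.exists_eq_add_of_le' hm
  obtain ⟨n, rfl⟩ := Nat.exists_eq_add_of_le' hn
  have hper2 : ∀ k, f (k + r + r) = A ^ 2 * B ^ (2 * k + r) * f k := fun k => by
    rw [hper, hper]; ring
  unfold EDSRel at h ⊢
  rw [show m + 1 + r + (n + 1 + r) = m + 1 + (n + 1) + r + r by omega,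
    show m + 1 + r - (n + 1 + r) = m + 1 - (n + 1) by omega,
    show m + 1 + r - 1 = m + r by omega, show n + 1 + r - 1 = n + r by omega,
    show m + 1 + r + 1 = m + 1 + 1 + r by omega, show n + 1 + r + 1 = n + 1 + 1 + r by omega,
    hper2, hper, hper, hper, hper, hper, hper]
  simp only [Nat.add_sub_cancel] at h ⊢
  linear_combination (A ^ 2 * B ^ (2 * (m + 1 + (n + 1)) + r)) * h
    + (f (m + 1 + 1) * f m * f (n + 1) ^ 2 - f (n + 1 + 1) * f n * f (m + 1) ^ 2)
      * B ^ (2 * m + 2 * n + 4) * A ^ 2 * hBA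

theorem of_lt_period {A B : R} {r a b : ℕ} (hr : 0 < r)
    (hper : ∀ k, f (k + r) = A * B ^ k * f k)
    (hBA : B ^ r = A ^ 2) (hb : 1 ≤ b) (hba : b ≤ a)
    (hbase : ∀ j < r, EDSRel f (j + a) (j + b)) (j : ℕ) : EDSRel f (j + a) (j + b) := by
  induction j using Nat.strong_induction_on with
  | _ j ih =>
    rcases lt_or_ge j r with hj | hj
    · exact hbase j hj
    · obtain ⟨k, rfl⟩ := Nat.exists_eq_add_of_le' hj
      rw [Nat.add_right_comm k r a, Nat.add_right_comm k r b]
      exact (ih k (by omega)).shift hper hBA (by omega) (by omega)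

theorem eq_of_forall_lt_five [IsDomain R] {g : ℕ → R}
    (hf₁ : ∀ j, EDSRel f (j + 2) (j + 1)) (hf₂ : ∀ j, EDSRel f (j + 3) (j + 1))
    (hg₁ : ∀ j, EDSRel g (j + 2) (j + 1)) (hg₂ : ∀ j, EDSRel g (j + 3) (j + 1))
    (h1 : f 1 ≠ 0) (h2 : f 2 ≠ 0) (hfg : ∀ n < 5, f n = g n) (n : ℕ) : f n = g n := by
  induction n using Nat.strong_induction_on with
  | _ n ih =>
    rcases lt_or_ge n 5 with hn | hn
    · exact hfg n hn
    obtain ⟨j, rfl | rfl⟩ : ∃ j, n = 2 * j + 3 ∨ n = 2 * j + 4 :=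
      ⟨(n - 3) / 2, by omega⟩
    · have hf := hf₁ j
      have hg := hg₁ j
      simp only [EDSRel, show j + 2 + (j + 1) = 2 * j + 3 by omega,
        show j + 2 - (j + 1) = 1 by omega, show j + 2 - 1 = j + 1 by omega, Nat.add_sub_cancel,
        show j + 2 + 1 = j + 3 by omega, show j + 1 + 1 = j + 2 by omega] at hf hg
      rw [← hfg 1 (by norm_num), ← ih (j + 3) (by omega), ← ih (j + 2) (by omega),
        ← ih (j + 1) (by omega), ← ih j (by omega), ← hf] at hg
      exact (mul_right_cancel₀ h1 hg).symm
    · have hf := hf₂ j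
      have hg := hg₂ j
      simp only [EDSRel, show j + 3 + (j + 1) = 2 * j + 4 by omega,
        show j + 3 - (j + 1) = 2 by omega, show j + 3 - 1 = j + 2 by omega, Nat.add_sub_cancel,
        show j + 3 + 1 = j + 4 by omega, show j + 1 + 1 = j + 2 by omega] at hf hg
      rw [← hfg 2 (by norm_num), ← ih (j + 4) (by omega), ← ih (j + 3) (by omega),
        ← ih (j + 2) (by omega), ← ih (j + 1) (by omega), ← ih j (by omega), ← hf] at hg
      exact (mul_right_cancel₀ h2 hg).symm

end EDSRel

def rank5Term (α : ℤ) (n : ℕ) : ℤ :=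
  (if n % 10 = 1 ∨ n % 10 = 4 ∨ n % 10 = 7 ∨ n % 10 = 8 then (1 : ℤ)
    else if n % 10 = 2 ∨ n % 10 = 3 ∨ n % 10 = 6 ∨ n % 10 = 9 then -1 else 0) *
  α ^ ((2 * n ^ 2 - (if n % 5 = 2 ∨ n % 5 = 3 then 3 else 2)) / 5)

theorem rank5Term_add_five (α : ℤ) (n : ℕ) :
    rank5Term α (n + 5) = -α ^ 10 * (α ^ 4) ^ n * rank5Term α n := by
  have hmod5 : (n + 5) % 5 = n % 5 := by omega
  have hmod10 : (n + 5) % 10 = (n % 10 + 5) % 10 := by omega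
  by_cases h5 : n % 5 = 0
  · obtain h | h : n % 10 = 0 ∨ n % 10 = 5 := by omega
    all_goals simp [rank5Term, hmod10, h]
  have hexp : (2 * (n + 5) ^ 2 - (if n % 5 = 2 ∨ n % 5 = 3 then 3 else 2)) / 5
      = (2 * n ^ 2 - (if n % 5 = 2 ∨ n % 5 = 3 then 3 else 2)) / 5 + (4 * n + 10) := by
    have hsq : (n + 5) ^ 2 = n ^ 2 + 10 * n + 25 := by ring
    have hle : n ≤ n ^ 2 := Nat.le_self_pow two_ne_zero n
    split_ifs <;> omega
  rw [rank5Term, rank5Term, hmod5, hexp, hmod10, pow_add, ← pow_mul]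
  generalize α ^ ((2 * n ^ 2 - (if n % 5 = 2 ∨ n % 5 = 3 then 3 else 2)) / 5) = a
  have hr : n % 10 < 10 := Nat.mod_lt n (by norm_num)
  have h5' : n % 10 % 5 ≠ 0 := by omega
  generalize n % 10 = r at hr h5' ⊢
  interval_cases r <;> simp at h5' ⊢ <;> ring

theorem rank5Term_edsRel_odd (α : ℤ) (j : ℕ) : EDSRel (rank5Term α) (j + 2) (j + 1) :=
  EDSRel.of_lt_period (by norm_num) (rank5Term_add_five α) (by ring) le_rfl (by norm_num)
    (fun j hj => by interval_cases j <;> norm_num [EDSRel, rank5Term] <;> ring) j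

theorem rank5Term_edsRel_even (α : ℤ) (j : ℕ) : EDSRel (rank5Term α) (j + 3) (j + 1) :=
  EDSRel.of_lt_period (by norm_num) (rank5Term_add_five α) (by ring) le_rfl (by norm_num)
    (fun j hj => by interval_cases j <;> norm_num [EDSRel, rank5Term] <;> ring) j

theorem eds_rank5_general_term_general (α : ℤ) (hα : α ≠ 0) (h : ℕ → ℤ)
    (hrec : ∀ m n : ℕ, 1 ≤ n → n ≤ m →
      h (m + n) * h (m - n) = h (m + 1) * h (m - 1) * h n ^ 2 - h (n + 1) * h (n - 1) * h m ^ 2)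
    (h0 : h 0 = 0) (h1 : h 1 = 1) (h2 : h 2 = -α) (h3 : h 3 = -α ^ 3)
    (h4 : h 4 = α ^ 6) :
    ∀ n : ℕ, h n =
      (if n % 10 = 1 ∨ n % 10 = 4 ∨ n % 10 = 7 ∨ n % 10 = 8 then (1 : ℤ)
       else if n % 10 = 2 ∨ n % 10 = 3 ∨ n % 10 = 6 ∨ n % 10 = 9 then -1 else 0) *
      α ^ ((2 * n ^ 2 - (if n % 5 = 2 ∨ n % 5 = 3 then 3 else 2)) / 5) := by
  have hinit : ∀ n < 5, h n = rank5Term α n := fun n hn => by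
    interval_cases n <;> simp [rank5Term, h0, h1, h2, h3, h4]
  exact EDSRel.eq_of_forall_lt_five (fun j => hrec _ _ (by omega) (by omega))
    (fun j => hrec _ _ (by omega) (by omega)) (rank5Term_edsRel_odd α) (rank5Term_edsRel_even α)
    (by simp [h1]) (by simpa [h2]) hinit

theorem eds_rank5_general_term (α : ℤ) (hα : α ≠ 0) (h : ℕ → ℤ)
    (hrec : ∀ m n : ℕ, 1 ≤ n → n ≤ m →
      h (m + n) * h (m - n) = h (m + 1) * h (m - 1) * h n ^ 2 - h (n + 1) * h (n - 1) * h m ^ 2)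
    (h0 : h 0 = 0) (h1 : h 1 = 1) (h2 : h 2 = -α) (h3 : h 3 = -α ^ 3)
    (h4 : h 4 = α ^ 6) (h5 : h 5 = 0) :
    ∀ n : ℕ, h n =
      (if n % 10 = 1 ∨ n % 10 = 4 ∨ n % 10 = 7 ∨ n % 10 = 8 then (1 : ℤ)
       else if n % 10 = 2 ∨ n % 10 = 3 ∨ n % 10 = 6 ∨ n % 10 = 9 then -1 else 0) *
      α ^ ((2 * n ^ 2 - (if n % 5 = 2 ∨ n % 5 = 3 then 3 else 2)) / 5) :=
  eds_rank5_general_term_general α hα h hrec h0 h1 h2 h3 h4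
end

section
/- Let a be a nonzero integer and let (h_n) be the improper elliptic divisibility sequence with h_1 = 1, h_2 = a, h_3 = 0, h_4 = -a^5. Then for all n not divisible by 3, h_n = ε·a^{(n^2-1)/3} where ε = +1 if n ≡ 1,2 (mod 6) and ε = -1 if n ≡ 4,5 (mod 6), and h_n = 0 whenever 3 divides n. -/
private def fEDS (a : ℤ) (n : ℕ) : ℤ :=
  if n % 3 = 0 then 0 else
    (if n % 6 = 1 ∨ n % 6 = 2 then (1 : ℤ) else -1) * a ^ ((n ^ 2 - 1) / 3)

private lemma fEDS_zero (a : ℤ) (n : ℕ) (hn : n % 3 = 0) : fEDS a n = 0 := by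
  simp [fEDS, hn]

private lemma fEDS_pos (a : ℤ) (n e : ℕ) (h6 : n % 6 = 1 ∨ n % 6 = 2)
    (he : n ^ 2 - 1 = 3 * e) : fEDS a n = a ^ e := by
  have h3 : ¬ (n % 3 = 0) := by omega
  have hd : (n ^ 2 - 1) / 3 = e := by rw [he]; omega
  rw [fEDS, if_neg h3, if_pos h6, hd, one_mul]

private lemma fEDS_neg (a : ℤ) (n e : ℕ) (h6 : n % 6 = 4 ∨ n % 6 = 5)
    (he : n ^ 2 - 1 = 3 * e) : fEDS a n = -a ^ e := by
  have h3 : ¬ (n % 3 = 0) := by omega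
  have h6' : ¬ (n % 6 = 1 ∨ n % 6 = 2) := by omega
  have hd : (n ^ 2 - 1) / 3 = e := by rw [he]; omega
  rw [fEDS, if_neg h3, if_neg h6', hd, neg_one_mul]

private lemma fEDS_ne (a : ℤ) (ha : a ≠ 0) (n : ℕ) (hn : ¬ (n % 3 = 0)) :
    fEDS a n ≠ 0 := by
  rw [fEDS, if_neg hn]
  rcases (by tauto : (n % 6 = 1 ∨ n % 6 = 2) ∨ ¬(n % 6 = 1 ∨ n % 6 = 2)) with hc | hc <;>
    simp [hc, pow_ne_zero, ha]

private lemma L1a (a : ℤ) (s : ℕ) :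
    fEDS a (6*s+8) * fEDS a (6*s+4) = a^2 * (fEDS a (6*s+7) * fEDS a (6*s+5)) := by
  rw [fEDS_pos a _ (12*s^2+32*s+21) (by omega)
        (by have : (6*s+8)^2 = 3*(12*s^2+32*s+21)+1 := by ring
            rw [this, Nat.add_sub_cancel]),
      fEDS_neg a _ (12*s^2+16*s+5) (by omega)
        (by have : (6*s+4)^2 = 3*(12*s^2+16*s+5)+1 := by ring
            rw [this, Nat.add_sub_cancel]),
      fEDS_pos a _ (12*s^2+28*s+16) (by omega)
        (by have : (6*s+7)^2 = 3*(12*s^2+28*s+16)+1 := by ring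
            rw [this, Nat.add_sub_cancel]),
      fEDS_neg a _ (12*s^2+20*s+8) (by omega)
        (by have : (6*s+5)^2 = 3*(12*s^2+20*s+8)+1 := by ring
            rw [this, Nat.add_sub_cancel])]
  have hexp : (12*s^2+32*s+21) + (12*s^2+16*s+5)
      = 2 + ((12*s^2+28*s+16) + (12*s^2+20*s+8)) := by ring
  simp only [mul_neg, neg_inj, ← pow_add, hexp]

private lemma L1b (a : ℤ) (s : ℕ) :
    fEDS a (6*s+5) * fEDS a (6*s+1) = a^2 * (fEDS a (6*s+4) * fEDS a (6*s+2)) := by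
  rw [fEDS_neg a _ (12*s^2+20*s+8) (by omega)
        (by have : (6*s+5)^2 = 3*(12*s^2+20*s+8)+1 := by ring
            rw [this, Nat.add_sub_cancel]),
      fEDS_pos a _ (12*s^2+4*s) (by omega)
        (by have : (6*s+1)^2 = 3*(12*s^2+4*s)+1 := by ring
            rw [this, Nat.add_sub_cancel]),
      fEDS_neg a _ (12*s^2+16*s+5) (by omega)
        (by have : (6*s+4)^2 = 3*(12*s^2+16*s+5)+1 := by ring
            rw [this, Nat.add_sub_cancel]),
      fEDS_pos a _ (12*s^2+8*s+1) (by omega)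
        (by have : (6*s+2)^2 = 3*(12*s^2+8*s+1)+1 := by ring
            rw [this, Nat.add_sub_cancel])]
  have hexp : (12*s^2+20*s+8) + (12*s^2+4*s)
      = 2 + ((12*s^2+16*s+5) + (12*s^2+8*s+1)) := by ring
  simp only [neg_mul, mul_neg, neg_inj, ← pow_add, hexp]

private lemma L2a (a : ℤ) (s : ℕ) :
    fEDS a (6*s+7) * fEDS a (6*s+1) = a^6 * fEDS a (6*s+4) ^ 2 := by
  rw [fEDS_pos a _ (12*s^2+28*s+16) (by omega)
        (by have : (6*s+7)^2 = 3*(12*s^2+28*s+16)+1 := by ring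
            rw [this, Nat.add_sub_cancel]),
      fEDS_pos a _ (12*s^2+4*s) (by omega)
        (by have : (6*s+1)^2 = 3*(12*s^2+4*s)+1 := by ring
            rw [this, Nat.add_sub_cancel]),
      fEDS_neg a _ (12*s^2+16*s+5) (by omega)
        (by have : (6*s+4)^2 = 3*(12*s^2+16*s+5)+1 := by ring
            rw [this, Nat.add_sub_cancel])]
  rw [neg_sq, ← pow_add, ← pow_mul]
  have hexp : (12*s^2+28*s+16) + (12*s^2+4*s) = 6 + (12*s^2+16*s+5) * 2 := by ring
  rw [hexp, pow_add]

private lemma L2b (a : ℤ) (s : ℕ) :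
    fEDS a (6*s+10) * fEDS a (6*s+4) = a^6 * fEDS a (6*s+7) ^ 2 := by
  rw [fEDS_neg a _ (12*s^2+40*s+33) (by omega)
        (by have : (6*s+10)^2 = 3*(12*s^2+40*s+33)+1 := by ring
            rw [this, Nat.add_sub_cancel]),
      fEDS_neg a _ (12*s^2+16*s+5) (by omega)
        (by have : (6*s+4)^2 = 3*(12*s^2+16*s+5)+1 := by ring
            rw [this, Nat.add_sub_cancel]),
      fEDS_pos a _ (12*s^2+28*s+16) (by omega)
        (by have : (6*s+7)^2 = 3*(12*s^2+28*s+16)+1 := by ring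
            rw [this, Nat.add_sub_cancel])]
  rw [← pow_mul, neg_mul_neg, ← pow_add]
  have hexp : (12*s^2+40*s+33) + (12*s^2+16*s+5) = 6 + (12*s^2+28*s+16) * 2 := by ring
  rw [hexp, pow_add]

private lemma eds_main (a : ℤ) (ha : a ≠ 0) (h : ℕ → ℤ)
    (hrec : ∀ m n : ℕ, 1 ≤ n → n ≤ m →
      h (m + n) * h (m - n) = h (m + 1) * h (m - 1) * h n ^ 2 - h (n + 1) * h (n - 1) * h m ^ 2)
    (h0 : h 0 = 0) (h1 : h 1 = 1) (h2 : h 2 = a) (h3 : h 3 = 0) (h4 : h 4 = -a ^ 5) :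
    ∀ k : ℕ, h k = fEDS a k := by
  intro k
  induction k using Nat.strong_induction_on with
  | _ k IH =>
  rcases lt_or_ge k 5 with hk | hk
  · interval_cases k <;> simp [fEDS, h0, h1, h2, h3, h4]
  · by_cases hk3 : k % 3 = 1
    · -- use m = k-3, n = 3
      have hk7 : 7 ≤ k := by omega
      have hr := hrec (k-3) 3 (by omega) (by omega)
      have e1 : k - 3 + 3 = k := by omega
      have e2 : k - 3 - 3 = k - 6 := by omega
      have e3 : k - 3 + 1 = k - 2 := by omega
      have e4 : k - 3 - 1 = k - 4 := by omega
      rw [e1, e2, e3, e4, h3, h4, h2] at hr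
      have ih6 := IH (k-6) (by omega)
      have ih3 := IH (k-3) (by omega)
      rw [ih6, ih3] at hr
      have key : fEDS a k * fEDS a (k-6) = a^6 * fEDS a (k-3) ^ 2 := by
        rcases (by omega : k % 6 = 1 ∨ k % 6 = 4) with hm | hm
        · obtain ⟨s, rfl⟩ : ∃ s, k = 6*s+7 := ⟨(k-7)/6, by omega⟩
          have d1 : 6*s+7-6 = 6*s+1 := by omega
          have d2 : 6*s+7-3 = 6*s+4 := by omega
          rw [d1, d2]; exact L2a a s
        · obtain ⟨s, rfl⟩ : ∃ s, k = 6*s+10 := ⟨(k-10)/6, by omega⟩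
          have d1 : 6*s+10-6 = 6*s+4 := by omega
          have d2 : 6*s+10-3 = 6*s+7 := by omega
          rw [d1, d2]; exact L2b a s
      have hne : fEDS a (k-6) ≠ 0 := fEDS_ne a ha _ (by omega)
      apply mul_right_cancel₀ hne
      rw [hr, key]; ring
    · -- use m = k-2, n = 2
      have hr := hrec (k-2) 2 (by omega) (by omega)
      have e1 : k - 2 + 2 = k := by omega
      have e2 : k - 2 - 2 = k - 4 := by omega
      have e3 : k - 2 + 1 = k - 1 := by omega
      have e4 : k - 2 - 1 = k - 3 := by omega
      rw [e1, e2, e3, e4, h1, h2, h3] at hr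
      have ih1 := IH (k-1) (by omega)
      have ih3 := IH (k-3) (by omega)
      have ih4 := IH (k-4) (by omega)
      rw [ih1, ih3, ih4] at hr
      have key : fEDS a k * fEDS a (k-4) = a^2 * (fEDS a (k-1) * fEDS a (k-3)) := by
        rcases (by omega : k % 6 = 0 ∨ k % 6 = 2 ∨ k % 6 = 3 ∨ k % 6 = 5) with hm | hm | hm | hm
        · rw [fEDS_zero a k (by omega), fEDS_zero a (k-3) (by omega)]; ring
        · obtain ⟨s, rfl⟩ : ∃ s, k = 6*s+8 := ⟨(k-8)/6, by omega⟩
          have d1 : 6*s+8-4 = 6*s+4 := by omega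
          have d2 : 6*s+8-1 = 6*s+7 := by omega
          have d3 : 6*s+8-3 = 6*s+5 := by omega
          rw [d1, d2, d3]; exact L1a a s
        · rw [fEDS_zero a k (by omega), fEDS_zero a (k-3) (by omega)]; ring
        · obtain ⟨s, rfl⟩ : ∃ s, k = 6*s+5 := ⟨(k-5)/6, by omega⟩
          have d1 : 6*s+5-4 = 6*s+1 := by omega
          have d2 : 6*s+5-1 = 6*s+4 := by omega
          have d3 : 6*s+5-3 = 6*s+2 := by omega
          rw [d1, d2, d3]; exact L1b a s
      have hne : fEDS a (k-4) ≠ 0 := fEDS_ne a ha _ (by omega)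
      apply mul_right_cancel₀ hne
      rw [hr, key]; ring

theorem eds_improper_rank3_general_term (a : ℤ) (ha : a ≠ 0) (h : ℕ → ℤ)
    (hrec : ∀ m n : ℕ, 1 ≤ n → n ≤ m →
      h (m + n) * h (m - n) = h (m + 1) * h (m - 1) * h n ^ 2 - h (n + 1) * h (n - 1) * h m ^ 2)
    (h0 : h 0 = 0) (h1 : h 1 = 1) (h2 : h 2 = a) (h3 : h 3 = 0) (h4 : h 4 = -a ^ 5) :
    (∀ n : ℕ, ¬ (3 ∣ n) →
      h n = (if n % 6 = 1 ∨ n % 6 = 2 then (1 : ℤ) else -1) * a ^ ((n ^ 2 - 1) / 3)) ∧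
    (∀ n : ℕ, 3 ∣ n → h n = 0) := by
  have main := eds_main a ha h hrec h0 h1 h2 h3 h4
  constructor
  · intro n hn
    have hn3 : ¬ (n % 3 = 0) := by omega
    rw [main n, fEDS, if_neg hn3]
  · intro n hn
    rw [main n, fEDS_zero a n (by omega)]
end

section
/- There is no integer β₁, β₂ solving β₂^3 + 2(-β₁)^3 = 1 other than (β₁, β₂) = (-1, -1) and (β₁,β₂)=(0,1) [i.e. the equation x^3 + 2y^3 = 1 has only the integer solutions (1,0) and (-1,1)]. Consequently, there is no integer α ∉ {0, 1} such that both α - 1 and 2α - 1 are perfect cubes. -/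
/-!
Put θ = ∛2. A solution of x³ + 2y³ = 1 is a unit x + yθ of norm 1 in ℤ[θ], and the norm-one
units are the powers of ε = θ - 1. Indeed, for X = a, Y = bθ, Z = cθ² the norm of a + bθ + cθ²
is (X + Y + Z) · ((X - Y)² + (Y - Z)² + (Z - X)²) / 2, so once a norm-one unit has been moved by a
power of ε into the window 1 ≤ X + Y + Z < ε⁻¹ = 1 + θ + θ², its coordinates are bounded and
only 1 is left.

It remains to see when the θ²-coordinate of εᵏ vanishes (Skolem). For k < 0, εᵏ = (1 + θ + θ²)⁻ᵏ
has positive coordinates. For k ≥ 0, ε³ = 1 + 3λ with λ = θ - θ², and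
(1 + 3λ)^(3ᵗ s) ≡ 1 + 3ᵗ⁺¹ s λ mod 3ᵗ⁺²; comparing θ²-coordinates of εʳ (1 + 3λ)ᵐ for r = 0, 1
gives 3ᵗ ∣ m for every t, while r = 2 is excluded mod 3. So k ∈ {0, 1}.
-/

section
variable {R : Type*} [CommRing R]

lemma exists_one_add_three_mul_pow_three_pow (x : R) (t : ℕ) :
    ∃ r : R, (1 + 3 * x) ^ 3 ^ t = 1 + 3 ^ (t + 1) * (x + 3 * r) := by
  induction t with
  | zero => exact ⟨0, by simp⟩
  | succ t ih =>
    obtain ⟨r, hr⟩ := ih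
    refine ⟨r + 3 ^ t * (x + 3 * r) ^ 2 + 3 ^ (2 * t) * (x + 3 * r) ^ 3, ?_⟩
    rw [pow_succ, pow_mul, hr]
    ring

lemma three_pow_dvd_one_add_three_mul_pow_sub (x : R) (t s : ℕ) :
    (3 : R) ^ (t + 2) ∣ (1 + 3 * x) ^ (3 ^ t * s) - (1 + 3 ^ (t + 1) * s * x) := by
  obtain ⟨r, hr⟩ := exists_one_add_three_mul_pow_three_pow x t
  set q := (3 : R) ^ (t + 1) * (x + 3 * r)
  have hq : (3 : R) ^ (t + 2) ∣ q ^ 2 :=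
    ⟨3 ^ t * (x + 3 * r) ^ 2, by ring⟩
  have key := sq_dvd_add_pow_sub_sub q 1 s
  simp only [one_pow, one_mul, add_comm 1 q] at key
  rw [pow_mul, hr]
  have hsplit : (1 + q) ^ s - (1 + 3 ^ (t + 1) * s * x) =
      ((q + 1) ^ s - q * s - 1) + 3 ^ (t + 2) * (s * r) := by
    simp only [q]; ring
  rw [hsplit]
  exact dvd_add (hq.trans key) (dvd_mul_right _ _)

end

lemma abs_two_mul_sub_sub_le_two {x y z : ℝ}
    (h : (x - y) ^ 2 + (y - z) ^ 2 + (z - x) ^ 2 ≤ 2) : |2 * x - y - z| ≤ 2 :=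
  abs_le_of_sq_le_sq (by nlinarith [sq_nonneg (y - z)]) zero_le_two

lemma map_val_zpow {F M α : Type*} [Monoid M] [DivisionMonoid α] [FunLike F M α]
    [MonoidHomClass F M α] (f : F) (u : Mˣ) (k : ℤ) : f ↑(u ^ k) = f ↑u ^ k := by
  have := congrArg Units.val (map_zpow (Units.map (f : M →* α)) u k)
  rwa [Units.val_zpow_eq_zpow_val, Units.coe_map, Units.coe_map, MonoidHom.coe_coe] at this

/-- `⟨a, b, c⟩` stands for `a + b ∛d + c ∛d²`: this is `ℤ[X] / (X³ - d)`. -/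
@[ext]
structure Zcbrtd (d : ℤ) where
  a : ℤ
  b : ℤ
  c : ℤ

namespace Zcbrtd

variable {d : ℤ}

instance : Zero (Zcbrtd d) := ⟨⟨0, 0, 0⟩⟩
instance : One (Zcbrtd d) := ⟨⟨1, 0, 0⟩⟩
instance : Add (Zcbrtd d) := ⟨fun u v => ⟨u.a + v.a, u.b + v.b, u.c + v.c⟩⟩
instance : Neg (Zcbrtd d) := ⟨fun u => ⟨-u.a, -u.b, -u.c⟩⟩
instance : Sub (Zcbrtd d) := ⟨fun u v => ⟨u.a - v.a, u.b - v.b, u.c - v.c⟩⟩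
instance : Mul (Zcbrtd d) := ⟨fun u v =>
  ⟨u.a * v.a + d * (u.b * v.c + u.c * v.b), u.a * v.b + u.b * v.a + d * u.c * v.c,
    u.a * v.c + u.b * v.b + u.c * v.a⟩⟩
instance : IntCast (Zcbrtd d) := ⟨fun n => ⟨n, 0, 0⟩⟩
instance : NatCast (Zcbrtd d) := ⟨fun n => ⟨n, 0, 0⟩⟩

@[simp] lemma zero_def : (0 : Zcbrtd d) = ⟨0, 0, 0⟩ := rfl
@[simp] lemma one_def : (1 : Zcbrtd d) = ⟨1, 0, 0⟩ := rfl
@[simp] lemma add_def (u v : Zcbrtd d) : u + v = ⟨u.a + v.a, u.b + v.b, u.c + v.c⟩ := rfl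
@[simp] lemma neg_def (u : Zcbrtd d) : -u = ⟨-u.a, -u.b, -u.c⟩ := rfl
@[simp] lemma sub_def (u v : Zcbrtd d) : u - v = ⟨u.a - v.a, u.b - v.b, u.c - v.c⟩ := rfl
@[simp] lemma mul_def (u v : Zcbrtd d) : u * v =
    ⟨u.a * v.a + d * (u.b * v.c + u.c * v.b), u.a * v.b + u.b * v.a + d * u.c * v.c,
      u.a * v.c + u.b * v.b + u.c * v.a⟩ := rfl
@[simp] lemma intCast_def (n : ℤ) : (n : Zcbrtd d) = ⟨n, 0, 0⟩ := rfl
lemma ofNat_def (n : ℕ) [n.AtLeastTwo] : (ofNat(n) : Zcbrtd d) = ⟨ofNat(n), 0, 0⟩ := rfl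
@[simp] lemma natCast_def (n : ℕ) : (n : Zcbrtd d) = ⟨n, 0, 0⟩ := rfl

instance : CommRing (Zcbrtd d) where
  add_assoc _ _ _ := by ext <;> simp [add_assoc]
  zero_add _ := by ext <;> simp
  add_zero _ := by ext <;> simp
  add_comm _ _ := by ext <;> simp [add_comm]
  mul_assoc _ _ _ := by ext <;> simp <;> ring
  one_mul _ := by ext <;> simp
  mul_one _ := by ext <;> simp
  zero_mul _ := by ext <;> simp
  mul_zero _ := by ext <;> simp
  left_distrib _ _ _ := by ext <;> simp <;> ring
  right_distrib _ _ _ := by ext <;> simp <;> ring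
  mul_comm _ _ := by ext <;> simp <;> ring
  neg_add_cancel _ := by ext <;> simp
  sub_eq_add_neg _ _ := by ext <;> simp [sub_eq_add_neg]
  natCast_zero := by ext <;> simp
  natCast_succ _ := by ext <;> simp
  intCast_ofNat _ := by ext <;> simp
  intCast_negSucc _ := by ext <;> simp [Int.negSucc_eq]
  nsmul := nsmulRec
  zsmul := zsmulRec

lemma dvd_c_of_intCast_dvd {m : ℤ} {w : Zcbrtd d} (h : (m : Zcbrtd d) ∣ w) : m ∣ w.c := by
  obtain ⟨v, rfl⟩ := h
  exact ⟨v.c, by simp⟩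

def norm : Zcbrtd d →* ℤ where
  toFun u := u.a ^ 3 + d * u.b ^ 3 + d ^ 2 * u.c ^ 3 - 3 * d * u.a * u.b * u.c
  map_one' := by simp
  map_mul' _ _ := by simp only [mul_def]; ring

lemma norm_apply (u : Zcbrtd d) :
    norm u = u.a ^ 3 + d * u.b ^ 3 + d ^ 2 * u.c ^ 3 - 3 * d * u.a * u.b * u.c := rfl

def lift {A : Type*} [CommRing A] (r : A) (hr : r ^ 3 = d) : Zcbrtd d →+* A where
  toFun u := u.a + u.b * r + u.c * r ^ 2
  map_one' := by simp
  map_zero' := by simp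
  map_add' _ _ := by simp only [add_def]; push_cast; ring
  map_mul' u v := by
    simp only [mul_def]
    push_cast
    linear_combination (-((u.b : A) * v.c + u.c * v.b) - u.c * v.c * r) * hr

lemma lift_apply {A : Type*} [CommRing A] (r : A) (hr : r ^ 3 = d) (u : Zcbrtd d) :
    lift r hr u = u.a + u.b * r + u.c * r ^ 2 := rfl

lemma two_mul_norm_eq {A : Type*} [CommRing A] (r : A) (hr : r ^ 3 = d) (u : Zcbrtd d) :
    2 * (norm u : A) = lift r hr u *
      ((u.a - u.b * r) ^ 2 + (u.b * r - u.c * r ^ 2) ^ 2 + (u.c * r ^ 2 - u.a) ^ 2) := by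
  rw [lift_apply, norm_apply]
  push_cast
  linear_combination
    (-2 * (u.b : A) ^ 3 - 2 * u.c ^ 3 * (r ^ 3 + d) + 6 * u.a * u.b * u.c) * hr

lemma sub_c (u v : Zcbrtd d) : (u - v).c = u.c - v.c := rfl

lemma intCast_mul_c (m : ℤ) (w : Zcbrtd d) : ((m : Zcbrtd d) * w).c = m * w.c := by simp

lemma eq_zero_of_c_mul_pow_eq_zero {v x : Zcbrtd d} (hv : v.c = 0) (hvx : ¬ 3 ∣ (v * x).c)
    {n : ℕ} (h : (v * (1 + 3 * x) ^ n).c = 0) : n = 0 := by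
  suffices ∀ t, 3 ^ t ∣ n from Nat.eq_zero_of_dvd_of_lt (this n) (Nat.lt_pow_self (by norm_num))
  intro t
  induction t with
  | zero => exact one_dvd n
  | succ t ih =>
    obtain ⟨s, rfl⟩ := ih
    have hdvd : ((3 ^ (t + 2) : ℤ) : Zcbrtd d) ∣
        v * (1 + 3 * x) ^ (3 ^ t * s) - v - ((3 ^ (t + 1) * s : ℤ) : Zcbrtd d) * (v * x) := by
      push_cast
      convert (three_pow_dvd_one_add_three_mul_pow_sub x t s).mul_left v using 1
      ring
    have hc := dvd_c_of_intCast_dvd hdvd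
    simp only [sub_c, intCast_mul_c, h, hv, sub_zero, zero_sub, dvd_neg] at hc
    have h3 : (3 : ℤ) ∣ s * (v * x).c := by
      rw [pow_succ, mul_assoc] at hc
      exact (mul_dvd_mul_iff_left (pow_ne_zero _ three_ne_zero)).mp hc
    have hs : 3 ∣ s := by
      exact_mod_cast (Int.prime_three.dvd_or_dvd h3).resolve_right hvx
    obtain ⟨k, rfl⟩ := hs
    exact ⟨k, by ring⟩

lemma three_dvd_c_mul_pow_sub (v x : Zcbrtd d) (n : ℕ) :
    (3 : ℤ) ∣ (v * (1 + 3 * x) ^ n).c - v.c := by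
  have h : ((3 : ℤ) : Zcbrtd d) ∣ v * (1 + 3 * x) ^ n - v := by
    have := (sub_dvd_pow_sub_pow (1 + 3 * x) 1 n).mul_left v
    rw [one_pow, add_sub_cancel_left, mul_sub, mul_one] at this
    exact (dvd_mul_right _ x).trans (by exact_mod_cast this)
  exact dvd_c_of_intCast_dvd h

def fundUnit : (Zcbrtd 2)ˣ where
  val := ⟨-1, 1, 0⟩
  inv := ⟨1, 1, 1⟩
  val_inv := by ext <;> simp
  inv_val := by ext <;> simp

lemma fundUnit_pow_three : (fundUnit : Zcbrtd 2) ^ 3 = 1 + 3 * ⟨0, 1, -1⟩ := by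
  ext <;> simp [fundUnit, pow_succ, ofNat_def]

theorem eq_zero_or_eq_one_of_fundUnit_pow_c_eq_zero {n : ℕ}
    (h : ((fundUnit : Zcbrtd 2) ^ n).c = 0) : n = 0 ∨ n = 1 := by
  obtain ⟨r, m, hr, rfl⟩ : ∃ r m, r < 3 ∧ n = r + 3 * m :=
    ⟨n % 3, n / 3, Nat.mod_lt _ (by norm_num), (Nat.mod_add_div n 3).symm⟩
  rw [pow_add, pow_mul, fundUnit_pow_three] at h
  interval_cases r
  · left
    simpa using eq_zero_of_c_mul_pow_eq_zero (by rfl) (by norm_num [fundUnit]) h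
  · right
    simpa using eq_zero_of_c_mul_pow_eq_zero (by rfl) (by norm_num [fundUnit]) h
  · have := three_dvd_c_mul_pow_sub ((fundUnit : Zcbrtd 2) ^ 2) ⟨0, 1, -1⟩ m
    rw [h] at this
    norm_num [fundUnit, pow_two] at this

lemma c_fundUnit_inv_pow_succ_pos (n : ℕ) :
    0 < (((fundUnit⁻¹ : (Zcbrtd 2)ˣ) : Zcbrtd 2) ^ (n + 1)).c := by
  suffices ∀ n : ℕ, 0 < (((fundUnit⁻¹ : (Zcbrtd 2)ˣ) : Zcbrtd 2) ^ (n + 1)).a ∧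
      0 < (((fundUnit⁻¹ : (Zcbrtd 2)ˣ) : Zcbrtd 2) ^ (n + 1)).b ∧
      0 < (((fundUnit⁻¹ : (Zcbrtd 2)ˣ) : Zcbrtd 2) ^ (n + 1)).c from (this n).2.2
  intro n
  induction n with
  | zero => simp [fundUnit]
  | succ n ih =>
    rw [pow_succ]
    generalize ((fundUnit⁻¹ : (Zcbrtd 2)ˣ) : Zcbrtd 2) ^ (n + 1) = p at ih ⊢
    simp only [mul_def, fundUnit, Units.inv_mk]
    omega

noncomputable def cbrtTwo : ℝ := 2 ^ (3⁻¹ : ℝ)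

lemma cbrtTwo_pos : 0 < cbrtTwo := Real.rpow_pos_of_pos two_pos _

lemma cbrtTwo_pow_three : cbrtTwo ^ 3 = 2 := by
  rw [cbrtTwo]
  exact_mod_cast Real.rpow_inv_natCast_pow (x := 2) (n := 3) (by norm_num) (by norm_num)

lemma one_lt_cbrtTwo : 1 < cbrtTwo := by
  have := cbrtTwo_pow_three
  by_contra h
  nlinarith [cbrtTwo_pos, mul_pos cbrtTwo_pos cbrtTwo_pos]

lemma cbrtTwo_lt_two : cbrtTwo < 2 := by
  have := cbrtTwo_pow_three
  nlinarith [one_lt_cbrtTwo, mul_pos cbrtTwo_pos cbrtTwo_pos]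

noncomputable def embed : Zcbrtd 2 →+* ℝ := lift cbrtTwo cbrtTwo_pow_three

lemma embed_apply (w : Zcbrtd 2) : embed w = w.a + w.b * cbrtTwo + w.c * cbrtTwo ^ 2 := rfl

lemma embed_fundUnit_inv : embed ↑(fundUnit⁻¹) = 1 + cbrtTwo + cbrtTwo ^ 2 := by
  simp [embed_apply, fundUnit]

lemma eq_one_of_norm_eq_one_of_embed_mem_Ico {w : Zcbrtd 2} (hN : norm w = 1)
    (hw : embed w ∈ Set.Ico 1 (embed ↑(fundUnit⁻¹))) : w = 1 := by
  obtain ⟨a, b, c⟩ := w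
  rw [embed_fundUnit_inv, embed_apply] at hw
  obtain ⟨hF1, hFy⟩ := hw
  set θ := cbrtTwo
  have hθ1 := one_lt_cbrtTwo
  have hθ2 := cbrtTwo_lt_two
  have hS : ((a : ℝ) - b * θ) ^ 2 + (b * θ - c * θ ^ 2) ^ 2 + (c * θ ^ 2 - a) ^ 2 ≤ 2 := by
    have := two_mul_norm_eq θ cbrtTwo_pow_three ⟨a, b, c⟩
    rw [hN, ← embed, embed_apply] at this
    push_cast at this
    nlinarith [sq_nonneg ((a : ℝ) - b * θ), sq_nonneg ((b : ℝ) * θ - c * θ ^ 2),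
      sq_nonneg ((c : ℝ) * θ ^ 2 - a)]
  obtain ⟨hx1, hx2⟩ := abs_le.mp (abs_two_mul_sub_sub_le_two hS)
  obtain ⟨hy1, hy2⟩ := abs_le.mp (abs_two_mul_sub_sub_le_two (x := b * θ) (y := c * θ ^ 2) (z := a)
    (by linarith))
  obtain ⟨hz1, hz2⟩ := abs_le.mp (abs_two_mul_sub_sub_le_two (x := c * θ ^ 2) (y := a) (z := b * θ)
    (by linarith))
  have hθsq : 1 < θ ^ 2 ∧ θ ^ 2 < 4 := ⟨by nlinarith, by nlinarith⟩
  obtain ⟨ha1, ha2⟩ : -1 < a ∧ a < 3 := by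
    constructor <;> (rw [← Int.cast_lt (R := ℝ)]; push_cast; nlinarith)
  obtain ⟨hb1, hb2⟩ : -1 < b ∧ b < 2 := by
    constructor <;> (rw [← Int.cast_lt (R := ℝ)]; push_cast; nlinarith)
  obtain ⟨hc1, hc2⟩ : -1 < c ∧ c < 2 := by
    constructor <;> (rw [← Int.cast_lt (R := ℝ)]; push_cast; nlinarith)
  interval_cases a <;> interval_cases b <;> interval_cases c <;>
    first | rfl | (norm_num [norm_apply] at hN; done) | (norm_num at hFy)

lemma embed_pos_of_norm_pos {w : Zcbrtd 2} (hN : 0 < norm w) : 0 < embed w := by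
  have h := two_mul_norm_eq cbrtTwo cbrtTwo_pow_three w
  rw [← embed] at h
  have h2 : (0 : ℝ) < 2 * norm w := by exact_mod_cast mul_pos two_pos hN
  rw [h] at h2
  exact pos_of_mul_pos_left h2 (by positivity)

lemma norm_fundUnit_zpow (k : ℤ) : norm (↑(fundUnit ^ k) : Zcbrtd 2) = 1 := by
  have h : Units.map norm fundUnit = 1 := Units.ext (by simp [norm_apply, fundUnit])
  rw [← Units.coe_map, map_zpow, h, one_zpow, Units.val_one]

theorem exists_eq_fundUnit_zpow {u : (Zcbrtd 2)ˣ} (hu : norm (u : Zcbrtd 2) = 1) :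
    ∃ k : ℤ, u = fundUnit ^ k := by
  set y := embed ↑(fundUnit⁻¹) with hy_def
  have hy : 1 < y := by
    rw [hy_def, embed_fundUnit_inv]
    nlinarith [cbrtTwo_pos]
  have hε : embed ↑fundUnit = y⁻¹ := eq_inv_of_mul_eq_one_left <| by
    rw [hy_def, ← map_mul, ← Units.val_mul, mul_inv_cancel, Units.val_one, map_one]
  obtain ⟨k, hk1, hk2⟩ := exists_mem_Ico_zpow (embed_pos_of_norm_pos (hu ▸ one_pos)) hy
  have hyk : 0 < y ^ k := zpow_pos (one_pos.trans hy) k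
  have hw : embed ↑(u * fundUnit ^ k) = embed ↑u / y ^ k := by
    rw [Units.val_mul, map_mul, map_val_zpow, hε, inv_zpow, div_eq_mul_inv]
  have h1 := eq_one_of_norm_eq_one_of_embed_mem_Ico
    (w := ↑(u * fundUnit ^ k)) (by rw [Units.val_mul, map_mul, hu, norm_fundUnit_zpow, one_mul])
    ⟨by rw [hw, le_div_iff₀ hyk, one_mul]; exact hk1,
     by rw [hw, div_lt_iff₀ hyk, ← zpow_one_add₀ (one_pos.trans hy).ne', add_comm]; exact hk2⟩
  exact ⟨-k, by rw [zpow_neg, eq_inv_iff_mul_eq_one]; exact Units.ext h1⟩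

theorem eq_of_pow_three_add_two_mul_pow_three_eq_one {x y : ℤ} (h : x ^ 3 + 2 * y ^ 3 = 1) :
    (x = 1 ∧ y = 0) ∨ (x = -1 ∧ y = 1) := by
  have hmul : (⟨x, y, 0⟩ : Zcbrtd 2) * ⟨x ^ 2, -(x * y), y ^ 2⟩ = 1 := by
    ext <;> simp
    · linear_combination h
    all_goals ring
  have hu : norm ((Units.mkOfMulEqOne _ _ hmul : (Zcbrtd 2)ˣ) : Zcbrtd 2) = 1 := by
    simp only [Units.val_mkOfMulEqOne, norm_apply]
    linear_combination h
  obtain ⟨k, hk⟩ := exists_eq_fundUnit_zpow hu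
  have hval := congrArg Units.val hk
  rw [Units.val_mkOfMulEqOne] at hval
  cases k with
  | ofNat n =>
    rw [Int.ofNat_eq_natCast, zpow_natCast, Units.val_pow_eq_pow_val] at hval
    have hc : ((fundUnit : Zcbrtd 2) ^ n).c = 0 := by rw [← hval]
    rcases eq_zero_or_eq_one_of_fundUnit_pow_c_eq_zero hc with rfl | rfl
    · simp_all
    · simp_all [fundUnit]
  | negSucc n =>
    rw [zpow_negSucc, ← inv_pow, Units.val_pow_eq_pow_val] at hval
    have hc : (((fundUnit⁻¹ : (Zcbrtd 2)ˣ) : Zcbrtd 2) ^ (n + 1)).c = 0 := by rw [← hval]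
    exact absurd hc (c_fundUnit_inv_pow_succ_pos n).ne'

end Zcbrtd

theorem thue_x3_plus_2y3 :
    (∀ x y : ℤ, x ^ 3 + 2 * y ^ 3 = 1 → (x = 1 ∧ y = 0) ∨ (x = -1 ∧ y = 1)) ∧
    ¬ ∃ α : ℤ, α ≠ 0 ∧ α ≠ 1 ∧ (∃ b : ℤ, α - 1 = b ^ 3) ∧ (∃ b : ℤ, 2 * α - 1 = b ^ 3) := by
  refine ⟨fun x y h => Zcbrtd.eq_of_pow_three_add_two_mul_pow_three_eq_one h, ?_⟩
  rintro ⟨α, h0, h1, ⟨b₁, hb₁⟩, ⟨b₂, hb₂⟩⟩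
  have h : b₂ ^ 3 + 2 * (-b₁) ^ 3 = 1 := by linear_combination 2 * hb₁ - hb₂
  rcases Zcbrtd.eq_of_pow_three_add_two_mul_pow_three_eq_one h with ⟨-, hb⟩ | ⟨-, hb⟩
  · obtain rfl : b₁ = 0 := by linarith
    exact h1 (by linear_combination hb₁)
  · obtain rfl : b₁ = -1 := by linarith
    exact h0 (by linear_combination hb₁)
end

section
/- There is no integer α ∉ {0, 1} such that both α and 2α - 1 are perfect cubes. Equivalently, the equation 2u^3 - v^3 = 1 in integers u, v has only the solutions (u,v) = (1,1) and (0,-1). -/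
/-!
Write `x = a + b`, `y = a - b`; then `x ^ 3 + y ^ 3 = 2 z ^ 3` becomes `a (a ^ 2 + 3 b ^ 2) = z ^ 3`
with `a, b` coprime of opposite parity. By Euler's lemma (unique factorisation in the Eisenstein
integers `ℤ[ω]`, where oddness rules out the units `±ω, ±ω²`), a cube `a ^ 2 + 3 b ^ 2` forces
`a + b √-3 = (p + q √-3) ^ 3`, i.e. `a = p (p - 3q) (p + 3q)` and `b = 3q (p - q) (p + q)`.
If `3 ∤ a`, the pairwise coprime factors of the cube `a` are cubes `r ^ 3, s ^ 3, t ^ 3` with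
`s ^ 3 + t ^ 3 = 2 r ^ 3`; if `a = 3c`, the same argument for `b ^ 2 + 3 c ^ 2` makes
`q, p - q, p + q` cubes with `t ^ 3 + (-s) ^ 3 = 2 r ^ 3`. In both cases `0 < |r| < |z|`, so by
descent `s = t` (resp. `t = -s`), which forces `b = 0`, that is `x = y`.
-/

lemma IsCoprime.sub_add {R : Type*} [CommRing R] {u v : R} (h : IsCoprime u v)
    (h2 : IsCoprime 2 (u + v)) : IsCoprime (u - v) (u + v) := by
  obtain ⟨a, b, hab⟩ := h
  obtain ⟨c, d, hcd⟩ := h2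
  exact ⟨c * a - c * b, c * a + c * b + d, by linear_combination hcd + 2 * c * hab⟩

namespace Int

lemma exists_pow_of_mul_mul_eq_pow {x y z c : ℤ} {k : ℕ} (hk : Odd k) (hxy : IsCoprime x y)
    (hxz : IsCoprime x z) (hyz : IsCoprime y z) (h : x * y * z = c ^ k) :
    (∃ r, x = r ^ k) ∧ (∃ s, y = s ^ k) ∧ ∃ t, z = t ^ k :=
  ⟨eq_pow_of_mul_eq_pow_odd_left (hxy.mul_right hxz) hk (by rw [← h, mul_assoc]),
    eq_pow_of_mul_eq_pow_odd_left (hxy.symm.mul_right hyz) hk (by rw [← h]; ring),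
    eq_pow_of_mul_eq_pow_odd_right (hxz.mul_left hyz) hk h⟩

lemma odd_and_odd_of_isCoprime_of_even_pow_add_pow {x y : ℤ} {n : ℕ} (hxy : IsCoprime x y)
    (hn : n ≠ 0) (h : Even (x ^ n + y ^ n)) : Odd x ∧ Odd y := by
  have hpar : Even x ↔ Even y := by simpa [parity_simps, hn] using h
  have hy : Odd y := by
    rw [← not_even_iff_odd]
    intro hy
    have := hxy.isUnit_of_dvd' (even_iff_two_dvd.mp (hpar.mpr hy)) (even_iff_two_dvd.mp hy)
    norm_num [isUnit_iff] at this
  exact ⟨by rwa [← not_even_iff_odd, hpar, not_even_iff_odd], hy⟩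

lemma isCoprime_three_sq_add_three_mul_sq {a : ℤ} (h : ¬ 3 ∣ a) (b : ℤ) :
    IsCoprime 3 (a ^ 2 + 3 * b ^ 2) :=
  prime_three.coprime_iff_not_dvd.mpr fun h3 =>
    h (prime_three.dvd_of_dvd_pow ((dvd_add_left (dvd_mul_right 3 (b ^ 2))).mp h3))

lemma natAbs_lt_natAbs_mul_of_dvd {r w m e : ℤ} (hrw : r ∣ w) (hw : w ≠ 0) (hm : w ^ 2 < m)
    (he : e ≠ 0) : r.natAbs < (e * m).natAbs := by
  have hr := natAbs_le_of_dvd_ne_zero hrw hw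
  have hw2 := natAbs_le_self_sq w
  have hm0 : 0 < m := (sq_nonneg w).trans_lt hm
  zify at hr hw2 ⊢
  rw [abs_mul, abs_of_pos hm0]
  nlinarith [mul_le_mul_of_nonneg_right (one_le_abs he) hm0.le]

end Int

/-- `⟨a, b⟩` stands for `a + b ω`, where `ω ^ 2 = -1 - ω`. -/
@[ext] structure Eisenstein where
  re : ℤ
  im : ℤ

namespace Eisenstein

instance : Zero Eisenstein := ⟨⟨0, 0⟩⟩
instance : One Eisenstein := ⟨⟨1, 0⟩⟩
instance : Add Eisenstein := ⟨fun x y => ⟨x.re + y.re, x.im + y.im⟩⟩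
instance : Neg Eisenstein := ⟨fun x => ⟨-x.re, -x.im⟩⟩
instance : Mul Eisenstein :=
  ⟨fun x y => ⟨x.re * y.re - x.im * y.im, x.re * y.im + x.im * y.re - x.im * y.im⟩⟩
instance : IntCast Eisenstein := ⟨fun n => ⟨n, 0⟩⟩
instance : NatCast Eisenstein := ⟨fun n => ⟨n, 0⟩⟩

@[simp] lemma zero_re : (0 : Eisenstein).re = 0 := rfl
@[simp] lemma zero_im : (0 : Eisenstein).im = 0 := rfl
@[simp] lemma one_re : (1 : Eisenstein).re = 1 := rfl
@[simp] lemma one_im : (1 : Eisenstein).im = 0 := rfl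
@[simp] lemma add_re (x y : Eisenstein) : (x + y).re = x.re + y.re := rfl
@[simp] lemma add_im (x y : Eisenstein) : (x + y).im = x.im + y.im := rfl
@[simp] lemma neg_re (x : Eisenstein) : (-x).re = -x.re := rfl
@[simp] lemma neg_im (x : Eisenstein) : (-x).im = -x.im := rfl
@[simp] lemma mul_re (x y : Eisenstein) : (x * y).re = x.re * y.re - x.im * y.im := rfl
@[simp] lemma mul_im (x y : Eisenstein) :
    (x * y).im = x.re * y.im + x.im * y.re - x.im * y.im := rfl
@[simp] lemma intCast_re (n : ℤ) : (n : Eisenstein).re = n := rfl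
@[simp] lemma intCast_im (n : ℤ) : (n : Eisenstein).im = 0 := rfl
@[simp] lemma natCast_re (n : ℕ) : (n : Eisenstein).re = n := rfl
@[simp] lemma natCast_im (n : ℕ) : (n : Eisenstein).im = 0 := rfl

instance : CommRing Eisenstein where
  add_assoc _ _ _ := by ext <;> simp [add_assoc]
  zero_add _ := by ext <;> simp
  add_zero _ := by ext <;> simp
  add_comm _ _ := by ext <;> simp [add_comm]
  mul_assoc _ _ _ := by ext <;> simp <;> ring
  one_mul _ := by ext <;> simp
  mul_one _ := by ext <;> simp
  left_distrib _ _ _ := by ext <;> simp <;> ring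
  right_distrib _ _ _ := by ext <;> simp <;> ring
  zero_mul _ := by ext <;> simp
  mul_zero _ := by ext <;> simp
  mul_comm _ _ := by ext <;> simp <;> ring
  neg_add_cancel _ := by ext <;> simp
  natCast_zero := by ext <;> simp
  natCast_succ _ := by ext <;> simp
  intCast_ofNat _ := by ext <;> simp
  intCast_negSucc _ := by ext <;> simp [Int.negSucc_eq]
  nsmul := nsmulRec
  zsmul := zsmulRec

@[simp] lemma sub_re (x y : Eisenstein) : (x - y).re = x.re - y.re := rfl
@[simp] lemma sub_im (x y : Eisenstein) : (x - y).im = x.im - y.im := rfl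
@[simp] lemma ofNat_re (n : ℕ) [n.AtLeastTwo] : (ofNat(n) : Eisenstein).re = OfNat.ofNat n := rfl
@[simp] lemma ofNat_im (n : ℕ) [n.AtLeastTwo] : (ofNat(n) : Eisenstein).im = 0 := rfl

def norm (x : Eisenstein) : ℤ := x.re ^ 2 - x.re * x.im + x.im ^ 2

def conj (x : Eisenstein) : Eisenstein := ⟨x.re - x.im, -x.im⟩

lemma norm_mul (x y : Eisenstein) : norm (x * y) = norm x * norm y := by
  simp only [norm, mul_re, mul_im]; ring

lemma mul_conj (x : Eisenstein) : x * conj x = norm x := by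
  ext <;> simp only [mul_re, mul_im, conj, norm, intCast_re, intCast_im] <;> ring

lemma norm_conj (x : Eisenstein) : norm (conj x) = norm x := by
  simp only [norm, conj]; ring

lemma norm_nonneg (x : Eisenstein) : 0 ≤ norm x := by
  unfold norm; nlinarith [sq_nonneg (2 * x.re - x.im), sq_nonneg x.im]

lemma norm_pos {x : Eisenstein} (hx : x ≠ 0) : 0 < norm x := by
  refine (norm_nonneg x).lt_of_ne fun h => hx ?_
  have h4 : (2 * x.re - x.im) ^ 2 + 3 * x.im ^ 2 = 0 := by
    unfold norm at h; linear_combination -4 * h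
  have him : x.im ^ 2 = 0 := by nlinarith [sq_nonneg (2 * x.re - x.im), sq_nonneg x.im]
  have hre : (2 * x.re - x.im) ^ 2 = 0 := by nlinarith [sq_nonneg x.im]
  simp only [ne_eq, OfNat.ofNat_ne_zero, not_false_eq_true, pow_eq_zero_iff] at him hre
  ext <;> simp <;> omega

lemma norm_lt_of_two_mul_abs_le {a b n : ℤ} (hn : 0 < n) (ha : 2 * |a| ≤ n) (hb : 2 * |b| ≤ n) :
    norm ⟨a, b⟩ < n ^ 2 := by
  have hab : -(a * b) ≤ |a| * |b| := abs_mul a b ▸ neg_le_abs _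
  simp only [norm]
  nlinarith [sq_abs a, sq_abs b, abs_nonneg a, abs_nonneg b]

/-- The integer nearest to `a / n`. -/
def roundDiv (a n : ℤ) : ℤ := (2 * a + n) / (2 * n)

lemma two_mul_abs_sub_mul_roundDiv_le {n : ℤ} (hn : 0 < n) (a : ℤ) :
    2 * |a - n * roundDiv a n| ≤ n := by
  have h := Int.mul_ediv_add_emod (2 * a + n) (2 * n)
  have h0 := Int.emod_nonneg (2 * a + n) (by omega : 2 * n ≠ 0)
  have h1 := Int.emod_lt_of_pos (2 * a + n) (by omega : 0 < 2 * n)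
  unfold roundDiv
  rw [← abs_two, ← abs_mul, abs_two, abs_le]
  constructor <;> linarith

instance : Div Eisenstein :=
  ⟨fun x y => ⟨roundDiv (x * conj y).re (norm y), roundDiv (x * conj y).im (norm y)⟩⟩

lemma div_def (x y : Eisenstein) :
    x / y = ⟨roundDiv (x * conj y).re (norm y), roundDiv (x * conj y).im (norm y)⟩ := rfl

instance : Mod Eisenstein := ⟨fun x y => x - y * (x / y)⟩

lemma norm_mod_lt (x : Eisenstein) {y : Eisenstein} (hy : y ≠ 0) : norm (x % y) < norm y := by
  have hn := norm_pos hy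
  set n := norm y
  have key : x % y * conj y = ⟨(x * conj y).re - n * roundDiv (x * conj y).re n,
      (x * conj y).im - n * roundDiv (x * conj y).im n⟩ := by
    have : x % y * conj y = x * conj y - y * conj y * (x / y) := by
      change (x - y * (x / y)) * conj y = _; ring
    rw [this, mul_conj]; ext <;> simp [div_def, n]
  have hlt := norm_lt_of_two_mul_abs_le hn (two_mul_abs_sub_mul_roundDiv_le hn (x * conj y).re)
    (two_mul_abs_sub_mul_roundDiv_le hn (x * conj y).im)
  rw [← key, norm_mul, norm_conj] at hlt
  nlinarith

instance : EuclideanDomain Eisenstein where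
  quotient := (· / ·)
  quotient_zero x := by ext <;> simp [div_def, roundDiv, norm]
  remainder := (· % ·)
  quotient_mul_add_remainder_eq x y := by change y * (x / y) + (x - y * (x / y)) = x; ring
  exists_pair_ne := ⟨0, 1, by simp [Eisenstein.ext_iff]⟩
  r := InvImage (· < ·) fun x => (norm x).natAbs
  r_wellFounded := (measure fun x => (norm x).natAbs).wf
  remainder_lt x y hy := by
    have := norm_mod_lt x hy; have := norm_nonneg (x % y)
    change (norm (x % y)).natAbs < (norm y).natAbs; omega
  mul_left_not_lt x y hy := by
    have := norm_pos hy; have := norm_nonneg x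
    change ¬ (norm (x * y)).natAbs < (norm x).natAbs
    rw [norm_mul]; zify; rw [abs_of_nonneg (by positivity), abs_of_nonneg (by positivity)]
    nlinarith

lemma norm_eq_one_of_isUnit {u : Eisenstein} (hu : IsUnit u) : norm u = 1 := by
  obtain ⟨v, hv⟩ := hu.exists_right_inv
  have h := congrArg norm hv
  rw [norm_mul, show norm 1 = 1 from rfl] at h
  exact Int.eq_one_of_mul_eq_one_right (norm_nonneg u) h

lemma eq_one_or_eq_neg_one_of_isUnit {u : Eisenstein} (hu : IsUnit u) (him : Even u.im) :
    u = 1 ∨ u = -1 := by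
  obtain ⟨k, hk⟩ := him
  have h : (u.re - k) ^ 2 + 3 * k ^ 2 = 1 := by
    have := norm_eq_one_of_isUnit hu
    rw [norm, hk] at this; linear_combination this
  have hk0 : k = 0 := by
    rw [← Int.abs_lt_one_iff, ← sq_lt_one_iff_abs_lt_one]; nlinarith [sq_nonneg (u.re - k)]
  rw [hk0] at h hk
  rcases sq_eq_one_iff.mp (by linarith : u.re ^ 2 = 1) with hre | hre
  · left; ext <;> simp [hre, hk]
  · right; ext <;> simp [hre, hk]

/-- `a + b √-3`, where `√-3 = 1 + 2 ω`. -/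
def ofSqrtNegThree (a b : ℤ) : Eisenstein := ⟨a + b, 2 * b⟩

lemma ofSqrtNegThree_inj {a b c d : ℤ} :
    ofSqrtNegThree a b = ofSqrtNegThree c d ↔ a = c ∧ b = d := by
  simp only [ofSqrtNegThree, Eisenstein.mk.injEq]; omega

lemma norm_ofSqrtNegThree (a b : ℤ) : norm (ofSqrtNegThree a b) = a ^ 2 + 3 * b ^ 2 := by
  simp only [norm, ofSqrtNegThree]; ring

lemma ofSqrtNegThree_mul_ofSqrtNegThree_neg (a b : ℤ) :
    ofSqrtNegThree a b * ofSqrtNegThree a (-b) = ((a ^ 2 + 3 * b ^ 2 : ℤ) : Eisenstein) := by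
  ext <;> simp only [ofSqrtNegThree, mul_re, mul_im, intCast_re, intCast_im] <;> ring

lemma ofSqrtNegThree_pow_three (p q : ℤ) :
    ofSqrtNegThree p q ^ 3 =
      ofSqrtNegThree (p ^ 3 - 9 * p * q ^ 2) (3 * p ^ 2 * q - 3 * q ^ 3) := by
  ext <;> simp [ofSqrtNegThree, pow_succ] <;> ring

lemma neg_ofSqrtNegThree (a b : ℤ) : -ofSqrtNegThree a b = ofSqrtNegThree (-a) (-b) := by
  ext <;> simp only [ofSqrtNegThree, neg_re, neg_im] <;> ring

-- Multiplying `γ` by `1`, `ω` or `ω ^ 2`, which does not change `γ ^ 3`, makes its `ω`-coordinate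
-- even.
lemma exists_ofSqrtNegThree_pow_three_eq (γ : Eisenstein) :
    ∃ p q : ℤ, ofSqrtNegThree p q ^ 3 = γ ^ 3 := by
  obtain ⟨c, d⟩ := γ
  obtain ⟨k, rfl | rfl⟩ := Int.even_or_odd' d
  · exact ⟨c - k, k, congrArg (· ^ 3) (by ext <;> simp [ofSqrtNegThree, two_mul])⟩
  obtain ⟨j, rfl | rfl⟩ := Int.even_or_odd' c
  · exact ⟨2 * k + 1 - j, -j, by ext <;> simp [ofSqrtNegThree, pow_succ] <;> ring⟩
  · exact ⟨-(2 * k + 1) - (j - k), j - k, by ext <;> simp [ofSqrtNegThree, pow_succ] <;> ring⟩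

lemma isCoprime_ofSqrtNegThree {a b : ℤ} (hab : IsCoprime a b)
    (h6 : IsCoprime (6 : ℤ) (a ^ 2 + 3 * b ^ 2)) :
    IsCoprime (ofSqrtNegThree a b) (ofSqrtNegThree a (-b)) := by
  obtain ⟨u, v, huv⟩ := hab
  have h6' : IsCoprime (6 : Eisenstein) (ofSqrtNegThree a b) := by
    have := h6.map (Int.castRingHom Eisenstein)
    rw [map_ofNat, eq_intCast, ← ofSqrtNegThree_mul_ofSqrtNegThree_neg] at this
    exact this.of_mul_right_left
  obtain ⟨x, y, hxy⟩ := h6'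
  -- `6 = 3u (α + ᾱ) - v √-3 (α - ᾱ)` lies in the ideal `(α, ᾱ)`.
  have hsix : (⟨3 * u - v, -2 * v⟩ : Eisenstein) * ofSqrtNegThree a b
      + ⟨3 * u + v, 2 * v⟩ * ofSqrtNegThree a (-b) = 6 := by
    ext <;> simp [ofSqrtNegThree] <;> [linear_combination 6 * huv; ring]
  exact ⟨y + x * ⟨3 * u - v, -2 * v⟩, x * ⟨3 * u + v, 2 * v⟩,
    by linear_combination hxy + x * hsix⟩

lemma even_im_of_even_im_ofSqrtNegThree_mul {A B : ℤ} {u : Eisenstein}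
    (h : Even (ofSqrtNegThree A B * u).im) (hAB : Odd (A + B)) : Even u.im := by
  have : (ofSqrtNegThree A B * u).im = (A + B) * u.im + 2 * (B * u.re - B * u.im) := by
    simp [ofSqrtNegThree]; ring
  rw [this] at h
  simp [parity_simps, ← Int.not_even_iff_odd] at h hAB
  tauto

theorem exists_ofSqrtNegThree_pow_three_eq_of_sq_add_three_mul_sq_eq_cube {a b m : ℤ}
    (hab : IsCoprime a b) (hodd : Odd (a + b)) (h3 : ¬ 3 ∣ a) (h : a ^ 2 + 3 * b ^ 2 = m ^ 3) :
    ∃ p q : ℤ, ofSqrtNegThree p q ^ 3 = ofSqrtNegThree a b := by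
  have hN : Odd (a ^ 2 + 3 * b ^ 2) := by simp [parity_simps] at hodd ⊢; tauto
  have h6 : IsCoprime (2 * 3 : ℤ) (a ^ 2 + 3 * b ^ 2) :=
    (Int.isCoprime_two_left.mpr hN).mul_left (Int.isCoprime_three_sq_add_three_mul_sq h3 b)
  obtain ⟨γ, u, hu⟩ := exists_associated_pow_of_mul_eq_pow' (isCoprime_ofSqrtNegThree hab h6)
    (by rw [ofSqrtNegThree_mul_ofSqrtNegThree_neg, h]; push_cast; rfl)
  obtain ⟨p, q, hpq⟩ := exists_ofSqrtNegThree_pow_three_eq γ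
  rw [← hpq] at hu
  have hodd' : Odd ((p ^ 3 - 9 * p * q ^ 2) + (3 * p ^ 2 * q - 3 * q ^ 3)) := by
    have := congrArg norm hu
    rw [norm_mul, norm_eq_one_of_isUnit u.isUnit, mul_one, ofSqrtNegThree_pow_three,
      norm_ofSqrtNegThree, norm_ofSqrtNegThree] at this
    rw [← this] at hN
    simp [parity_simps] at hN ⊢; tauto
  -- Both `a + b √-3` and the cube have even `ω`-coordinate, hence so does the unit.
  rcases eq_one_or_eq_neg_one_of_isUnit u.isUnit <| even_im_of_even_im_ofSqrtNegThree_mul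
    (by rw [← ofSqrtNegThree_pow_three, hu]; exact ⟨b, two_mul b⟩) hodd' with h1 | h1
  · exact ⟨p, q, by rw [← hu, h1, mul_one]⟩
  · exact ⟨-p, -q, by rw [← hu, h1, ← neg_ofSqrtNegThree]; ring⟩

end Eisenstein

open Eisenstein

theorem exists_eq_of_sq_add_three_mul_sq_eq_cube {a b m : ℤ} (hab : IsCoprime a b)
    (hodd : Odd (a + b)) (h3 : ¬ 3 ∣ a) (h : a ^ 2 + 3 * b ^ 2 = m ^ 3) :
    ∃ p q : ℤ, IsCoprime p q ∧ Odd (p + q) ∧ a = p ^ 3 - 9 * p * q ^ 2 ∧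
      b = 3 * p ^ 2 * q - 3 * q ^ 3 ∧ m = p ^ 2 + 3 * q ^ 2 := by
  obtain ⟨p, q, hpq⟩ :=
    exists_ofSqrtNegThree_pow_three_eq_of_sq_add_three_mul_sq_eq_cube hab hodd h3 h
  rw [ofSqrtNegThree_pow_three, ofSqrtNegThree_inj] at hpq
  obtain ⟨rfl, rfl⟩ := hpq
  refine ⟨p, q, ?_, by simp [parity_simps] at hodd ⊢; tauto, rfl, rfl,
    ((by decide : Odd 3).pow_inj).mp (by rw [← h]; ring)⟩
  have : IsCoprime (p * (p ^ 2 - 9 * q ^ 2)) (q * (3 * p ^ 2 - 3 * q ^ 2)) := by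
    convert hab using 1 <;> ring
  exact this.of_mul_left_left.of_mul_right_left

def OnlyTrivialSolutionsBelow (N : ℕ) : Prop :=
  ∀ ⦃s t r : ℤ⦄, r ≠ 0 → r.natAbs < N → IsCoprime s t → s ^ 3 + t ^ 3 = 2 * r ^ 3 → s = t

lemma eq_zero_of_mul_sq_add_three_mul_sq_eq_cube_of_not_three_dvd {a b z : ℤ}
    (IH : OnlyTrivialSolutionsBelow z.natAbs) (hab : IsCoprime a b) (hodd : Odd (a + b))
    (ha : a ≠ 0) (h3 : ¬ 3 ∣ a) (h : a * (a ^ 2 + 3 * b ^ 2) = z ^ 3) : b = 0 := by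
  have hcop : IsCoprime a (a ^ 2 + 3 * b ^ 2) := by
    have h3a : IsCoprime a 3 := (Int.prime_three.coprime_iff_not_dvd.mpr h3).symm
    rw [show a ^ 2 + 3 * b ^ 2 = 3 * b ^ 2 + a * a by ring]
    exact (h3a.mul_right hab.pow_right).add_mul_left_right a
  obtain ⟨⟨e, he⟩, ⟨m, hm⟩⟩ := Int.eq_pow_of_mul_eq_pow_odd hcop (by decide : Odd 3) h
  have hz : z = e * m := ((by decide : Odd 3).pow_inj).mp (by rw [← h, hm, he]; ring)
  obtain ⟨p, q, hpq, hpq2, rfl, rfl, rfl⟩ := exists_eq_of_sq_add_three_mul_sq_eq_cube hab hodd h3 hm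
  by_cases hq : q = 0
  · simp [hq]
  have hp : p ≠ 0 := by rintro rfl; simp at ha
  -- `a = p (p - 3q) (p + 3q)`, and these factors are pairwise coprime
  have hp3q : IsCoprime p (3 * q) := by
    refine IsCoprime.mul_right (Int.prime_three.coprime_iff_not_dvd.mpr fun h3p => h3 ?_).symm hpq
    exact h3p.trans ⟨p ^ 2 - 9 * q ^ 2, by ring⟩
  have hsub : IsCoprime p (p - 3 * q) := by
    rw [show p - 3 * q = -(3 * q) + p * 1 by ring]; exact hp3q.neg_right.add_mul_left_right 1
  have hadd : IsCoprime p (p + 3 * q) := by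
    rw [show p + 3 * q = 3 * q + p * 1 by ring]; exact hp3q.add_mul_left_right 1
  have hsa : IsCoprime (p - 3 * q) (p + 3 * q) :=
    hp3q.sub_add (Int.isCoprime_two_left.mpr (by simp [parity_simps] at hpq2 ⊢; tauto))
  obtain ⟨⟨r, hr⟩, ⟨s, hs⟩, ⟨t, ht⟩⟩ :=
    Int.exists_pow_of_mul_mul_eq_pow (by decide : Odd 3) hsub hadd hsa (by rw [← he]; ring)
  have hst : s = t := by
    refine IH (r := r) ?_ ?_ ?_ (by linear_combination 2 * hr - hs - ht)
    · rintro rfl; exact hp (by simpa using hr)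
    · rw [hz]
      refine Int.natAbs_lt_natAbs_mul_of_dvd ⟨r ^ 2, by rw [hr]; ring⟩ hp
        (lt_add_of_pos_right _ (by positivity)) ?_
      rintro rfl; exact ha (by rw [he]; ring)
    · rw [hs, ht] at hsa
      exact (IsCoprime.pow_iff (m := 3) (n := 3) (by decide) (by decide)).mp hsa
  subst hst
  exact absurd (by linarith) hq

lemma eq_zero_of_mul_sq_add_three_mul_sq_eq_cube_of_three_dvd {a b z : ℤ}
    (IH : OnlyTrivialSolutionsBelow z.natAbs) (hab : IsCoprime a b) (hodd : Odd (a + b))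
    (ha : a ≠ 0) (h3 : 3 ∣ a) (h : a * (a ^ 2 + 3 * b ^ 2) = z ^ 3) : b = 0 := by
  obtain ⟨c, rfl⟩ := h3
  have h3b : ¬ 3 ∣ b := fun h3b =>
    Int.prime_three.not_isUnit (hab.isUnit_of_dvd' (dvd_mul_right 3 c) h3b)
  have hbc : IsCoprime b c := hab.of_mul_left_right.symm
  have hcop : IsCoprime (3 * 3 * c) (b ^ 2 + 3 * c ^ 2) := by
    have h3N := Int.isCoprime_three_sq_add_three_mul_sq h3b c
    have hcN : IsCoprime c (b ^ 2 + 3 * c ^ 2) := by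
      rw [show b ^ 2 + 3 * c ^ 2 = b ^ 2 + c * (3 * c) by ring]
      exact hbc.symm.pow_right.add_mul_left_right _
    exact (h3N.mul_left h3N).mul_left hcN
  obtain ⟨⟨e, he⟩, ⟨m, hm⟩⟩ :=
    Int.eq_pow_of_mul_eq_pow_odd hcop (by decide : Odd 3) (by rw [← h]; ring)
  have hz : z = e * m := ((by decide : Odd 3).pow_inj).mp <| by
    rw [← h]; linear_combination (b ^ 2 + 3 * c ^ 2) * he + e ^ 3 * hm
  obtain ⟨p, q, hpq, hpq2, rfl, rfl, rfl⟩ := exists_eq_of_sq_add_three_mul_sq_eq_cube hbc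
    (by simp [parity_simps, ← Int.not_even_iff_odd] at hodd ⊢; tauto) h3b hm
  -- `9c = 27 q (p - q) (p + q)`, and these three factors are pairwise coprime
  obtain ⟨f, rfl⟩ : (3 : ℤ) ∣ e :=
    Int.prime_three.dvd_of_dvd_pow (n := 3) ⟨3 * (3 * p ^ 2 * q - 3 * q ^ 3), by rw [← he]; ring⟩
  have hprod : q * (p - q) * (p + q) = f ^ 3 :=
    mul_left_cancel₀ (by norm_num : (27 : ℤ) ≠ 0) (by linear_combination he)
  have hq : q ≠ 0 := by rintro rfl; simp at ha
  have hsub : IsCoprime q (p - q) := by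
    rw [show p - q = p + q * (-1) by ring]; exact hpq.symm.add_mul_left_right _
  have hadd : IsCoprime q (p + q) := by
    rw [show p + q = p + q * 1 by ring]; exact hpq.symm.add_mul_left_right _
  have hsa : IsCoprime (p - q) (p + q) := hpq.sub_add (Int.isCoprime_two_left.mpr hpq2)
  obtain ⟨⟨r, hr⟩, ⟨s, hs⟩, ⟨t, ht⟩⟩ :=
    Int.exists_pow_of_mul_mul_eq_pow (by decide : Odd 3) hsub hadd hsa hprod
  have hts : t = -s := by
    refine IH (r := r) ?_ ?_ ?_ (by linear_combination 2 * hr + hs - ht)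
    · rintro rfl; exact hq (by simpa using hr)
    · rw [hz]
      refine Int.natAbs_lt_natAbs_mul_of_dvd ⟨r ^ 2, by rw [hr]; ring⟩ hq
        (by nlinarith [sq_nonneg p, sq_pos_of_ne_zero hq]) ?_
      intro h0
      rw [h0] at he
      exact ha (by linarith)
    · rw [hs, ht] at hsa
      exact ((IsCoprime.pow_iff (m := 3) (n := 3) (by decide) (by decide)).mp hsa.symm).neg_right
  subst hts
  have hp : p = 0 := by
    have : 2 * p = 0 := by linear_combination hs + ht
    omega
  simp [hp]

theorem eq_of_cube_add_cube_eq_two_mul_cube {x y z : ℤ} (hxy : IsCoprime x y) (hz : z ≠ 0)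
    (h : x ^ 3 + y ^ 3 = 2 * z ^ 3) : x = y := by
  induction hn : z.natAbs using Nat.strong_induction_on generalizing x y z with
  | _ n ih =>
  have IH : OnlyTrivialSolutionsBelow z.natAbs := fun s t r hr hrn hst hstr =>
    ih _ (hn ▸ hrn) hst hr hstr rfl
  obtain ⟨hx, hy⟩ :=
    Int.odd_and_odd_of_isCoprime_of_even_pow_add_pow hxy three_ne_zero (h ▸ even_two_mul _)
  obtain ⟨a, b, rfl, rfl⟩ : ∃ a b, x = a + b ∧ y = a - b := by
    obtain ⟨⟨i, rfl⟩, ⟨j, rfl⟩⟩ := And.intro hx hy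
    exact ⟨i + j + 1, i - j, by ring, by ring⟩
  have hab : IsCoprime a b := by
    obtain ⟨u, v, huv⟩ := hxy
    exact ⟨u + v, u - v, by linear_combination huv⟩
  have heq : a * (a ^ 2 + 3 * b ^ 2) = z ^ 3 :=
    mul_left_cancel₀ two_ne_zero (by linear_combination h)
  have ha : a ≠ 0 := by
    rintro rfl
    exact hz (pow_eq_zero_iff three_ne_zero |>.mp (by linear_combination -heq))
  have hb : b = 0 := by
    by_cases h3 : 3 ∣ a
    · exact eq_zero_of_mul_sq_add_three_mul_sq_eq_cube_of_three_dvd IH hab hx ha h3 heq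
    · exact eq_zero_of_mul_sq_add_three_mul_sq_eq_cube_of_not_three_dvd IH hab hx ha h3 heq
  rw [hb, add_zero, sub_zero]

theorem classical_2u3_minus_v3 :
    (¬ ∃ α : ℤ, α ≠ 0 ∧ α ≠ 1 ∧ (∃ u : ℤ, α = u ^ 3) ∧ (∃ v : ℤ, 2 * α - 1 = v ^ 3)) ∧
    (∀ u v : ℤ, 2 * u ^ 3 - v ^ 3 = 1 → (u = 1 ∧ v = 1) ∨ (u = 0 ∧ v = -1)) := by
  have hsol : ∀ u v : ℤ, 2 * u ^ 3 - v ^ 3 = 1 → (u = 1 ∧ v = 1) ∨ (u = 0 ∧ v = -1) := by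
    intro u v h
    rcases eq_or_ne u 0 with rfl | hu
    · exact Or.inr ⟨rfl, ((by decide : Odd 3).pow_inj).mp (by linear_combination -h)⟩
    obtain rfl : v = 1 :=
      eq_of_cube_add_cube_eq_two_mul_cube isCoprime_one_right hu (by linear_combination -h)
    exact Or.inl ⟨((by decide : Odd 3).pow_inj).mp (by linarith), rfl⟩
  refine ⟨?_, hsol⟩
  rintro ⟨α, hα0, hα1, ⟨u, rfl⟩, ⟨v, hv⟩⟩
  rcases hsol u v (by linear_combination hv) with ⟨rfl, -⟩ | ⟨rfl, -⟩
  · exact hα1 (one_pow 3)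
  · exact hα0 (zero_pow three_ne_zero)
end
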